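/- arXiv:2510.09086 — 10 statements merged into one kernel-verified Lean document; each statement's English description precedes it below -/
import Mathlib

section
/- Let F₅ be the finite field with five elements and let s₀, s₁, s₂, s₃ ∈ F₅. The function f : F₅ → F₅ given by f(x) = s₃x³ + s₂x² + s₁x + s₀ is a bijection of F₅ if and only if (s₁ + s₃)⁴ = 1 and s₂² = 3·s₁·s₃. -/
/-- For `s₀, s₁, s₂, s₃ ∈ F₅`, the map
`x ↦ s₃x³ + s₂x² + s₁x + s₀` is a bijection of `F₅` if and only if
`(s₁ + s₃)⁴ = 1` and `s₂² = 3·s₁·s₃`. -/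
theorem stmt_3 (s₀ s₁ s₂ s₃ : ZMod 5) :
    Function.Bijective (fun x : ZMod 5 => s₃ * x ^ 3 + s₂ * x ^ 2 + s₁ * x + s₀) ↔
      (s₁ + s₃) ^ 4 = 1 ∧ s₂ ^ 2 = 3 * s₁ * s₃ := by
  revert s₀ s₁ s₂ s₃
  decide
end

section
/- Let F₄ be the finite field with four elements. A function f : F₄ × F₄ → F₄ satisfying f(x,y) = f(y,x) for all x, y is a local permutation polynomial over F₄ if and only if there exist s₀₀, s₁₀, s₁₁, s₂₀, s₂₁, s₂₂ ∈ F₄ satisfying s₁₀³ + s₂₀³ = 1, s₁₁(s₂₂³ + 1) = 0, s₂₁(s₂₂³ + 1) = 0, s₂₀s₂₁ + s₁₀s₂₂ + s₂₂² = 0 and s₁₁s₂₁ + s₂₂² = 0, such that f(x,y) = (s₂₂xy + s₂₁(x+y) + s₁₁)xy + s₂₀(x² + y²) + s₁₀(x+y) + s₀₀ for all x, y. -/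
/-- The field with four elements. -/
abbrev F₄ : Type := GaloisField 2 2

/-- `f : F × F → F` is a local permutation polynomial if both sections
`x ↦ f (x, a)` and `x ↦ f (a, x)` are bijections of `F` for every `a`. -/
def IsLPP {F : Type*} (f : F × F → F) : Prop :=
  ∀ a : F, Function.Bijective (fun x => f (x, a)) ∧ Function.Bijective (fun x => f (a, x))

/-!
A row `x ↦ f (x, b)` of an LPP permutes `F₄`, so it sums to `∑ a, a = 0`; up to sign this is the
`x³` coefficient of its Lagrange interpolation, so `f` has degree at most two in `x`, and by
symmetry also in `y`. Symmetry of `f` also makes the coefficient matrix symmetric, which gives the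
displayed shape. Each row is then a quadratic `A x² + B x + C`, and since `x ↦ x²` is additive
on `F₄`, it permutes `F₄` iff exactly one of `A`, `B` vanishes, i.e. iff `A³ + B³ = 1`. Requiring
this for every row is equivalent to the five constraints. Both finite facts are decided in a
computable model of `F₄` and transported to any four-element field along a ring isomorphism.
-/

open Finset Function

/-- A computable model of `F₄`, with `ωbar = ω + 1 = ω ^ 2`. -/
inductive GF4 : Type
  | zero | one | ω | ωbar
  deriving DecidableEq

namespace GF4

instance : Fintype GF4 :=
  ⟨⟨↑[zero, one, ω, ωbar], by decide⟩, fun x => by cases x <;> decide⟩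

def add : GF4 → GF4 → GF4
  | zero, x | x, zero => x
  | one, one | ω, ω | ωbar, ωbar => zero
  | one, ω | ω, one => ωbar
  | one, ωbar | ωbar, one => ω
  | ω, ωbar | ωbar, ω => one

def mul : GF4 → GF4 → GF4
  | zero, _ | _, zero => zero
  | one, x | x, one => x
  | ω, ω => ωbar
  | ωbar, ωbar => ω
  | ω, ωbar | ωbar, ω => one

def inv : GF4 → GF4
  | zero => zero
  | one => one
  | ω => ωbar
  | ωbar => ω

instance : Zero GF4 := ⟨zero⟩
instance : One GF4 := ⟨one⟩
instance : Add GF4 := ⟨add⟩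
instance : Mul GF4 := ⟨mul⟩
instance : Neg GF4 := ⟨id⟩
instance : Inv GF4 := ⟨inv⟩

instance : CommRing GF4 where
  add_assoc := by decide
  zero_add := by decide
  add_zero := by decide
  add_comm := by decide
  neg_add_cancel := by decide
  mul_assoc := by decide
  one_mul := by decide
  mul_one := by decide
  mul_comm := by decide
  left_distrib := by decide
  right_distrib := by decide
  zero_mul := by decide
  mul_zero := by decide
  nsmul := nsmulRec
  zsmul := zsmulRec

instance : Field GF4 where
  exists_pair_ne := ⟨zero, one, by decide⟩
  mul_inv_cancel := by decide
  inv_zero := rfl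
  nnqsmul := _
  qsmul := _

theorem card_eq_four : Fintype.card GF4 = 4 := rfl

theorem bijective_quadratic_iff (A B C : GF4) :
    Bijective (fun x => A * x ^ 2 + B * x + C) ↔ A ^ 3 + B ^ 3 = 1 := by
  revert A B C; decide

theorem forall_cube_add_cube_eq_one_iff (s₁₀ s₁₁ s₂₀ s₂₁ s₂₂ : GF4) :
    (∀ a, (s₂₂ * a ^ 2 + s₂₁ * a + s₂₀) ^ 3 + (s₂₁ * a ^ 2 + s₁₁ * a + s₁₀) ^ 3 = 1) ↔
      s₁₀ ^ 3 + s₂₀ ^ 3 = 1 ∧ s₁₁ * (s₂₂ ^ 3 + 1) = 0 ∧ s₂₁ * (s₂₂ ^ 3 + 1) = 0 ∧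
        s₂₀ * s₂₁ + s₁₀ * s₂₂ + s₂₂ ^ 2 = 0 ∧ s₁₁ * s₂₁ + s₂₂ ^ 2 = 0 := by
  revert s₁₀ s₁₁ s₂₀ s₂₁ s₂₂; decide

end GF4

/-- Coefficients of `1 - (x - a) ^ 3 = ∑ k, lagrangeWeight a k * x ^ k`. -/
def lagrangeWeight {R : Type*} [CommRing R] (a : R) : Fin 4 → R :=
  ![1 + a ^ 3, -3 * a ^ 2, 3 * a, -1]

theorem one_sub_sub_pow_three {R : Type*} [CommRing R] (x a : R) :
    1 - (x - a) ^ 3 = ∑ k, lagrangeWeight a k * x ^ (k : ℕ) := by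
  simp [Fin.sum_univ_four, lagrangeWeight]
  ring

namespace FourElementField

variable {K : Type*} [Field K] [Fintype K]

theorem bijective_quadratic_iff (hK : Fintype.card K = 4) (A B C : K) :
    Bijective (fun x => A * x ^ 2 + B * x + C) ↔ A ^ 3 + B ^ 3 = 1 := by
  let e : K ≃+* GF4 := FiniteField.ringEquivOfCardEq (hK.trans GF4.card_eq_four.symm)
  have hconj : (fun x => A * x ^ 2 + B * x + C) =
      e.symm ∘ (fun y => e A * y ^ 2 + e B * y + e C) ∘ e := by
    funext x; simp
  rw [hconj, EquivLike.comp_bijective, EquivLike.bijective_comp, GF4.bijective_quadratic_iff,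
    ← e.injective.eq_iff]
  simp

theorem forall_cube_add_cube_eq_one_iff (hK : Fintype.card K = 4) (s₁₀ s₁₁ s₂₀ s₂₁ s₂₂ : K) :
    (∀ a, (s₂₂ * a ^ 2 + s₂₁ * a + s₂₀) ^ 3 + (s₂₁ * a ^ 2 + s₁₁ * a + s₁₀) ^ 3 = 1) ↔
      s₁₀ ^ 3 + s₂₀ ^ 3 = 1 ∧ s₁₁ * (s₂₂ ^ 3 + 1) = 0 ∧ s₂₁ * (s₂₂ ^ 3 + 1) = 0 ∧
        s₂₀ * s₂₁ + s₁₀ * s₂₂ + s₂₂ ^ 2 = 0 ∧ s₁₁ * s₂₁ + s₂₂ ^ 2 = 0 := by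
  let e : K ≃+* GF4 := FiniteField.ringEquivOfCardEq (hK.trans GF4.card_eq_four.symm)
  simp only [← e.injective.eq_iff, map_add, map_mul, map_pow, map_one, map_zero,
    e.symm.surjective.forall, RingEquiv.apply_symm_apply]
  exact GF4.forall_cube_add_cube_eq_one_iff _ _ _ _ _

theorem sum_eq_zero_of_bijective (hK : Fintype.card K = 4) {g : K → K} (hg : Bijective g) :
    ∑ a, g a = 0 := by
  rw [hg.sum_comp (fun x => x)]
  simpa using FiniteField.sum_pow_lt_card_sub_one (K := K) 1 (by omega)

theorem sub_pow_three_eq_ite [DecidableEq K] (hK : Fintype.card K = 4) (x a : K) :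
    (x - a) ^ 3 = if x = a then 0 else 1 := by
  split_ifs with h
  · simp [h]
  · simpa [hK] using FiniteField.pow_card_sub_one_eq_one (x - a) (sub_ne_zero.mpr h)

def interpCoeff (g : K → K) (k : Fin 4) : K :=
  ∑ a, g a * lagrangeWeight a k

theorem eq_sum_interpCoeff (hK : Fintype.card K = 4) (g : K → K) (x : K) :
    g x = ∑ k, interpCoeff g k * x ^ (k : ℕ) := by
  classical
  calc g x = ∑ a, g a * (1 - (x - a) ^ 3) := by
        simp [sub_pow_three_eq_ite hK, apply_ite]
    _ = ∑ k, interpCoeff g k * x ^ (k : ℕ) := by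
        simp only [one_sub_sub_pow_three, interpCoeff, mul_sum, sum_mul, mul_assoc]
        exact sum_comm

theorem interpCoeff_three (g : K → K) : interpCoeff g 3 = -∑ a, g a := by
  simp [interpCoeff, lagrangeWeight]

def interpCoeff₂ (f : K × K → K) (k l : Fin 4) : K :=
  interpCoeff (fun b => interpCoeff (fun a => f (a, b)) k) l

theorem eq_sum_interpCoeff₂ (hK : Fintype.card K = 4) (f : K × K → K) (x y : K) :
    f (x, y) = ∑ k, ∑ l, interpCoeff₂ f k l * x ^ (k : ℕ) * y ^ (l : ℕ) := by
  rw [eq_sum_interpCoeff hK (fun a => f (a, y)) x]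
  refine sum_congr rfl fun k _ => ?_
  rw [eq_sum_interpCoeff hK (fun b => interpCoeff (fun a => f (a, b)) k) y, sum_mul]
  exact sum_congr rfl fun l _ => by simp only [interpCoeff₂]; ring

theorem interpCoeff₂_comm {f : K × K → K} (hsym : ∀ x y, f (x, y) = f (y, x)) (k l : Fin 4) :
    interpCoeff₂ f k l = interpCoeff₂ f l k := by
  simp only [interpCoeff₂, interpCoeff, sum_mul]
  rw [sum_comm]
  exact sum_congr rfl fun a _ => sum_congr rfl fun b _ => by rw [hsym]; ring

theorem interpCoeff₂_three_left {f : K × K → K} (hrow : ∀ b, ∑ a, f (a, b) = 0) (l : Fin 4) :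
    interpCoeff₂ f 3 l = 0 := by
  simp only [interpCoeff₂, interpCoeff_three, hrow, neg_zero]
  simp [interpCoeff]

theorem exists_eq_symm_quadratic_form (hK : Fintype.card K = 4) {f : K × K → K}
    (hsym : ∀ x y, f (x, y) = f (y, x)) (hrow : ∀ b, ∑ a, f (a, b) = 0) :
    ∃ s₀₀ s₁₀ s₁₁ s₂₀ s₂₁ s₂₂ : K, ∀ x y, f (x, y) =
      (s₂₂ * x * y + s₂₁ * (x + y) + s₁₁) * x * y +
        s₂₀ * (x ^ 2 + y ^ 2) + s₁₀ * (x + y) + s₀₀ := by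
  have hc3 : ∀ k, interpCoeff₂ f k 3 = 0 := fun k =>
    (interpCoeff₂_comm hsym k 3).trans (interpCoeff₂_three_left hrow k)
  refine ⟨interpCoeff₂ f 0 0, interpCoeff₂ f 1 0, interpCoeff₂ f 1 1, interpCoeff₂ f 2 0,
    interpCoeff₂ f 2 1, interpCoeff₂ f 2 2, fun x y => ?_⟩
  rw [eq_sum_interpCoeff₂ hK f x y]
  simp only [Fin.sum_univ_four, interpCoeff₂_three_left hrow, hc3, interpCoeff₂_comm hsym 0 1,
    interpCoeff₂_comm hsym 0 2, interpCoeff₂_comm hsym 1 2]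
  simp only [Fin.val_zero, Fin.val_one, Fin.val_two, zero_mul, add_zero]
  ring

theorem bijective_section_iff (hK : Fintype.card K = 4) {f : K × K → K}
    {s₀₀ s₁₀ s₁₁ s₂₀ s₂₁ s₂₂ : K} (hform : ∀ x y, f (x, y) =
      (s₂₂ * x * y + s₂₁ * (x + y) + s₁₁) * x * y +
        s₂₀ * (x ^ 2 + y ^ 2) + s₁₀ * (x + y) + s₀₀) (a : K) :
    Bijective (fun x => f (x, a)) ↔
      (s₂₂ * a ^ 2 + s₂₁ * a + s₂₀) ^ 3 + (s₂₁ * a ^ 2 + s₁₁ * a + s₁₀) ^ 3 = 1 := by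
  have hquad : (fun x => f (x, a)) = fun x => (s₂₂ * a ^ 2 + s₂₁ * a + s₂₀) * x ^ 2 +
      (s₂₁ * a ^ 2 + s₁₁ * a + s₁₀) * x + (s₂₀ * a ^ 2 + s₁₀ * a + s₀₀) :=
    funext fun x => by rw [hform]; ring
  rw [hquad, bijective_quadratic_iff hK]

theorem isLPP_iff_of_symmetric (hK : Fintype.card K = 4) (f : K × K → K)
    (hsym : ∀ x y, f (x, y) = f (y, x)) :
    IsLPP f ↔
      ∃ s₀₀ s₁₀ s₁₁ s₂₀ s₂₁ s₂₂ : K,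
        s₁₀ ^ 3 + s₂₀ ^ 3 = 1 ∧
        s₁₁ * (s₂₂ ^ 3 + 1) = 0 ∧
        s₂₁ * (s₂₂ ^ 3 + 1) = 0 ∧
        s₂₀ * s₂₁ + s₁₀ * s₂₂ + s₂₂ ^ 2 = 0 ∧
        s₁₁ * s₂₁ + s₂₂ ^ 2 = 0 ∧
        ∀ x y, f (x, y) =
          (s₂₂ * x * y + s₂₁ * (x + y) + s₁₁) * x * y +
            s₂₀ * (x ^ 2 + y ^ 2) + s₁₀ * (x + y) + s₀₀ := by
  constructor
  · intro hf
    obtain ⟨s₀₀, s₁₀, s₁₁, s₂₀, s₂₁, s₂₂, hform⟩ := exists_eq_symm_quadratic_form hK hsym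
      fun b => sum_eq_zero_of_bijective hK (hf b).1
    obtain ⟨h₁, h₂, h₃, h₄, h₅⟩ := (forall_cube_add_cube_eq_one_iff hK _ _ _ _ _).mp
      fun a => (bijective_section_iff hK hform a).mp (hf a).1
    exact ⟨s₀₀, s₁₀, s₁₁, s₂₀, s₂₁, s₂₂, h₁, h₂, h₃, h₄, h₅, hform⟩
  · rintro ⟨s₀₀, s₁₀, s₁₁, s₂₀, s₂₁, s₂₂, h₁, h₂, h₃, h₄, h₅, hform⟩ a
    have hbij : Bijective fun x => f (x, a) := (bijective_section_iff hK hform a).mpr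
      ((forall_cube_add_cube_eq_one_iff hK _ _ _ _ _).mpr ⟨h₁, h₂, h₃, h₄, h₅⟩ a)
    have hswap : (fun x => f (a, x)) = fun x => f (x, a) := funext (hsym a)
    exact ⟨hbij, hswap ▸ hbij⟩

end FourElementField

/-- A symmetric function `f : F₄ × F₄ → F₄` is an LPP over `F₄`
if and only if it has the stated polynomial form with coefficients satisfying
the five listed constraints. -/
theorem stmt_5 (f : F₄ × F₄ → F₄) (hsym : ∀ x y : F₄, f (x, y) = f (y, x)) :
    IsLPP f ↔
      ∃ s₀₀ s₁₀ s₁₁ s₂₀ s₂₁ s₂₂ : F₄,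
        s₁₀ ^ 3 + s₂₀ ^ 3 = 1 ∧
        s₁₁ * (s₂₂ ^ 3 + 1) = 0 ∧
        s₂₁ * (s₂₂ ^ 3 + 1) = 0 ∧
        s₂₀ * s₂₁ + s₁₀ * s₂₂ + s₂₂ ^ 2 = 0 ∧
        s₁₁ * s₂₁ + s₂₂ ^ 2 = 0 ∧
        ∀ x y : F₄, f (x, y) =
          (s₂₂ * x * y + s₂₁ * (x + y) + s₁₁) * x * y +
            s₂₀ * (x ^ 2 + y ^ 2) + s₁₀ * (x + y) + s₀₀ := by
  let := Fintype.ofFinite F₄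
  have hcard : Fintype.card F₄ = 4 := by
    rw [← Nat.card_eq_fintype_card, GaloisField.card 2 2 two_ne_zero]
    rfl
  exact FourElementField.isLPP_iff_of_symmetric hcard f hsym
end

section
/- Let F₄ be the finite field with four elements. A function f : F₄ × F₄ → F₄ is a reduced local permutation polynomial over F₄ if and only if there exists a ∈ F₄ such that f(x,y) = (a³xy + a(x+y) + a²)xy + x + y for all x, y. In particular, there are exactly 4 reduced LPPs over F₄. -/
/-- `f` is reduced if `f (x, 0) = x` and `f (0, y) = y` for all `x, y`. -/
def IsReducedLPP {F : Type*} [Zero F] (f : F × F → F) : Prop :=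
  (∀ x : F, f (x, 0) = x) ∧ (∀ y : F, f (0, y) = y)

/-
A reduced LPP on a four-element set is a reduced Latin square of order 4, and a backtracking
search shows there are exactly four of them, namely the tables of `lppPoly a`. The search runs in
an explicit computable model of F₄; since `lppPoly` commutes with ring isomorphisms, the
classification and the injectivity of `a ↦ lppPoly a` transfer to `GaloisField 2 2` along the
isomorphism given by uniqueness of finite fields.
-/

open Function

def lppPoly {R : Type*} [Semiring R] (a : R) (p : R × R) : R :=
  (a ^ 3 * p.1 * p.2 + a * (p.1 + p.2) + a ^ 2) * p.1 * p.2 + p.1 + p.2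

theorem isReducedLPP_lppPoly {R : Type*} [Semiring R] (a : R) : IsReducedLPP (lppPoly a) :=
  ⟨fun x => by simp [lppPoly], fun y => by simp [lppPoly]⟩

theorem map_lppPoly {R S F : Type*} [Semiring R] [Semiring S] [FunLike F R S] [RingHomClass F R S]
    (e : F) (a : R) (p : R × R) :
    e (lppPoly a p) = lppPoly (e a) (e p.1, e p.2) := by
  simp [lppPoly]

section Transport

variable {α β : Type*}

def Equiv.binopCongr (e : α ≃ β) : (α × α → α) ≃ (β × β → β) :=
  (e.prodCongr e).arrowCongr e

@[simp]
theorem Equiv.binopCongr_apply (e : α ≃ β) (f : α × α → α) (p : β × β) :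
    e.binopCongr f p = e (f (e.symm p.1, e.symm p.2)) :=
  rfl

theorem Equiv.binopCongr_symm (e : α ≃ β) : e.binopCongr.symm = e.symm.binopCongr :=
  rfl

theorem IsLPP.binopCongr {f : α × α → α} (hf : IsLPP f) (e : α ≃ β) :
    IsLPP (e.binopCongr f) := fun a =>
  ⟨e.bijective.comp ((hf (e.symm a)).1.comp e.symm.bijective),
    e.bijective.comp ((hf (e.symm a)).2.comp e.symm.bijective)⟩

theorem IsReducedLPP.binopCongr [Zero α] [Zero β] {f : α × α → α} (hf : IsReducedLPP f)
    (e : α ≃ β) (he : e 0 = 0) : IsReducedLPP (e.binopCongr f) := by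
  have he' : e.symm 0 = 0 := e.symm_apply_eq.2 he.symm
  exact ⟨fun x => by simp [he', hf.1], fun y => by simp [he', hf.2]⟩

end Transport

section Transfer

variable {R S : Type*} [Semiring R] [Semiring S]

theorem RingEquiv.binopCongr_lppPoly (e : R ≃+* S) (a : R) :
    e.toEquiv.binopCongr (lppPoly a) = lppPoly (e a) := by
  ext p
  simp [map_lppPoly]

theorem isLPP_and_isReducedLPP_iff_of_ringEquiv (e : R ≃+* S)
    (hR : ∀ f : R × R → R, IsLPP f ∧ IsReducedLPP f ↔ ∃ a, lppPoly a = f)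
    (g : S × S → S) : IsLPP g ∧ IsReducedLPP g ↔ ∃ b, lppPoly b = g := by
  constructor
  · rintro ⟨hl, hr⟩
    obtain ⟨a, ha⟩ := (hR _).1 ⟨hl.binopCongr e.toEquiv.symm,
      hr.binopCongr e.toEquiv.symm (map_zero e.symm)⟩
    refine ⟨e a, ?_⟩
    rw [← e.binopCongr_lppPoly, ha, ← Equiv.binopCongr_symm, Equiv.apply_symm_apply]
  · rintro ⟨b, rfl⟩
    obtain ⟨hl, hr⟩ := (hR _).2 ⟨e.symm b, rfl⟩
    rw [← e.apply_symm_apply b, ← e.binopCongr_lppPoly]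
    exact ⟨hl.binopCongr e.toEquiv, hr.binopCongr e.toEquiv (map_zero e)⟩

theorem lppPoly_injective_of_ringEquiv (e : R ≃+* S)
    (hR : Injective (lppPoly : R → R × R → R)) : Injective (lppPoly : S → S × S → S) := by
  have : Injective ((lppPoly : S → S × S → S) ∘ e) := by
    simpa only [comp_def, ← e.binopCongr_lppPoly] using e.toEquiv.binopCongr.injective.comp hR
  simpa only [comp_def, e.apply_symm_apply] using this.comp e.symm.injective

end Transfer

inductive GF4_s6 : Type
  | zero | one | ω | ω2
  deriving DecidableEq

namespace GF4_s6

instance inst_s6 : Fintype GF4_s6 :=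
  ⟨⟨↑[zero, one, ω, ω2], by decide⟩, fun x => by cases x <;> decide⟩

instance inst_s6_2 : Zero GF4_s6 := ⟨zero⟩
instance inst_s6_3 : One GF4_s6 := ⟨one⟩

-- `𝔽₂[ω]/(ω² + ω + 1)`, with `ω2 = ω² = ω + 1`.
instance inst_s6_4 : Add GF4_s6 := ⟨fun
  | zero, x => x
  | x, zero => x
  | one, one => zero | one, ω => ω2 | one, ω2 => ω
  | ω, one => ω2 | ω, ω => zero | ω, ω2 => one
  | ω2, one => ω | ω2, ω => one | ω2, ω2 => zero⟩

instance inst_s6_5 : Mul GF4_s6 := ⟨fun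
  | zero, _ => zero
  | _, zero => zero
  | one, x => x
  | x, one => x
  | ω, ω => ω2 | ω, ω2 => one
  | ω2, ω => one | ω2, ω2 => ω⟩

instance inst_s6_6 : Neg GF4_s6 := ⟨id⟩

instance inst_s6_7 : CommRing GF4_s6 where
  add_assoc := by decide
  zero_add := by decide
  add_zero := by decide
  add_comm := by decide
  left_distrib := by decide
  right_distrib := by decide
  zero_mul := by decide
  mul_zero := by decide
  mul_assoc := by decide
  one_mul := by decide
  mul_one := by decide
  neg_add_cancel := by decide
  mul_comm := by decide
  nsmul := nsmulRec
  zsmul := zsmulRec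

theorem isField : IsField GF4_s6 where
  exists_pair_ne := ⟨0, 1, by decide⟩
  mul_comm := mul_comm
  mul_inv_cancel := by decide

noncomputable instance inst_s6_8 : Field GF4_s6 := isField.toField

theorem nonempty_ringEquiv_galoisField : Nonempty (GF4_s6 ≃+* GaloisField 2 2) := by
  let := Fintype.ofFinite (GaloisField 2 2)
  refine ⟨FiniteField.ringEquivOfCardEq ?_⟩
  rw [Fintype.card_eq_nat_card (α := GaloisField 2 2), GaloisField.card 2 2 two_ne_zero]
  rfl

theorem lppPoly_injective : Injective (lppPoly : GF4_s6 → GF4_s6 × GF4_s6 → GF4_s6) := by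
  decide

theorem isLPP_lppPoly : ∀ a : GF4_s6, IsLPP (lppPoly a) := by
  unfold IsLPP
  decide

def innerBlock (f : GF4_s6 × GF4_s6 → GF4_s6) : List (List GF4_s6) :=
  [1, ω, ω2].map fun x => [1, ω, ω2].map fun y => f (x, y)

theorem eq_of_innerBlock_eq {f g : GF4_s6 × GF4_s6 → GF4_s6} (hf : IsReducedLPP f) (hg : IsReducedLPP g)
    (h : innerBlock f = innerBlock g) : f = g := by
  simp only [innerBlock, List.map_inj_left, List.mem_cons, List.not_mem_nil, or_false] at h
  ext ⟨x, y⟩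
  cases x <;> cases y <;> first
    | exact (hf.2 _).trans (hg.2 _).symm
    | exact (hf.1 _).trans (hg.1 _).symm
    | exact h _ (by decide) _ (by decide)

-- Each row's hypothesis precedes the next row's quantifiers, so that `decide` prunes row by row.
theorem exists_innerBlock_lppPoly_eq_of_latin : ∀ a b c : GF4_s6, [1, a, b, c].Nodup →
    ∀ d e f : GF4_s6, [ω, d, e, f].Nodup → ∀ g h i : GF4_s6, [ω2, g, h, i].Nodup →
    [1, a, d, g].Nodup → [ω, b, e, h].Nodup → [ω2, c, f, i].Nodup →
    ∃ k : GF4_s6, [[a, b, c], [d, e, f], [g, h, i]] = innerBlock (lppPoly k) := by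
  decide

theorem isLPP_and_isReducedLPP_iff (f : GF4_s6 × GF4_s6 → GF4_s6) :
    IsLPP f ∧ IsReducedLPP f ↔ ∃ a, lppPoly a = f := by
  constructor
  · rintro ⟨hl, hr⟩
    have elems_nodup : [0, 1, ω, ω2].Nodup := by decide
    have row (x : GF4_s6) : [x, f (x, 1), f (x, ω), f (x, ω2)].Nodup := by
      simpa only [List.map_cons, List.map_nil, hr.1] using elems_nodup.map (hl x).2.injective
    have col (y : GF4_s6) : [y, f (1, y), f (ω, y), f (ω2, y)].Nodup := by
      simpa only [List.map_cons, List.map_nil, hr.2] using elems_nodup.map (hl y).1.injective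
    obtain ⟨a, ha⟩ := exists_innerBlock_lppPoly_eq_of_latin
      _ _ _ (row 1) _ _ _ (row ω) _ _ _ (row ω2) (col 1) (col ω) (col ω2)
    exact ⟨a, eq_of_innerBlock_eq (isReducedLPP_lppPoly a) hr ha.symm⟩
  · rintro ⟨a, rfl⟩
    exact ⟨isLPP_lppPoly a, isReducedLPP_lppPoly a⟩

end GF4_s6

/-- A function `f : F₄ × F₄ → F₄` is a reduced LPP over `F₄`
if and only if `f (x, y) = (a³xy + a(x+y) + a²)xy + x + y` for some `a ∈ F₄`;
in particular there are exactly `4` reduced LPPs over `F₄`. -/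
theorem stmt_6 :
    (∀ f : F₄ × F₄ → F₄, (IsLPP f ∧ IsReducedLPP f) ↔
      ∃ a : F₄, ∀ x y : F₄,
        f (x, y) = (a ^ 3 * x * y + a * (x + y) + a ^ 2) * x * y + x + y) ∧
    Nat.card {f : F₄ × F₄ → F₄ | IsLPP f ∧ IsReducedLPP f} = 4 := by
  obtain ⟨e⟩ := GF4_s6.nonempty_ringEquiv_galoisField
  have classification := isLPP_and_isReducedLPP_iff_of_ringEquiv e GF4_s6.isLPP_and_isReducedLPP_iff
  refine ⟨fun f => (classification f).trans (exists_congr fun a => ?_), ?_⟩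
  · simp only [funext_iff, Prod.forall, lppPoly, eq_comm]
  · rw [show {f | IsLPP f ∧ IsReducedLPP f} = Set.range lppPoly from Set.ext classification,
      Nat.card_range_of_injective (lppPoly_injective_of_ringEquiv e GF4_s6.lppPoly_injective)]
    exact GaloisField.card 2 2 two_ne_zero
end

section
/- Let q be a prime power and F_q the finite field with q elements. The number of local permutation polynomials over F_q equals q!·(q−1)! times the number of reduced local permutation polynomials over F_q; that is, Nat.card {f : F_q × F_q → F_q | f is an LPP} = q! · (q−1)! · Nat.card {f : F_q × F_q → F_q | f is a reduced LPP}. -/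
section Aux

variable {F : Type*} [Field F] [Fintype F]

/-- Composing with permutations on each coordinate. -/
def lppComp (σ : Equiv.Perm F) (τ : {τ : Equiv.Perm F // τ 0 = 0})
    (h : {f : F × F → F // IsLPP f ∧ IsReducedLPP f}) : {f : F × F → F // IsLPP f} := by
  refine ⟨fun p => h.1 (τ.1 p.1, σ p.2), fun a => ⟨?_, ?_⟩⟩
  · have : (fun x => h.1 (τ.1 x, σ a)) = (fun x => h.1 (x, σ a)) ∘ τ.1 := rfl
    rw [this]
    exact ((h.2.1 (σ a)).1).comp τ.1.bijective
  · have : (fun y => h.1 (τ.1 a, σ y)) = (fun y => h.1 (τ.1 a, y)) ∘ σ := rfl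
    rw [this]
    exact ((h.2.1 (τ.1 a)).2).comp σ.bijective

lemma lppComp_bijective :
    Function.Bijective (fun x : Equiv.Perm F × {τ : Equiv.Perm F // τ 0 = 0} ×
      {f : F × F → F // IsLPP f ∧ IsReducedLPP f} => lppComp x.1 x.2.1 x.2.2) := by
  constructor
  · rintro ⟨σ, τ, h⟩ ⟨σ', τ', h'⟩ heq
    have key : ∀ p : F × F, h.1 (τ.1 p.1, σ p.2) = h'.1 (τ'.1 p.1, σ' p.2) :=
      fun p => congrFun (congrArg Subtype.val heq) p
    have hσ : σ = σ' := by
      ext y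
      have := key (0, y)
      simpa [τ.2, τ'.2, h.2.2.2, h'.2.2.2] using this
    subst hσ
    have hτ : τ = τ' := by
      ext x
      have := key (x, σ.symm 0)
      simpa [h.2.2.1, h'.2.2.1] using this
    subst hτ
    have hh : h = h' := by
      apply Subtype.ext
      funext p
      have := key (τ.1.symm p.1, σ.symm p.2)
      simpa using this
    subst hh
    rfl
  · rintro ⟨f, hf⟩
    set σ : Equiv.Perm F := Equiv.ofBijective (fun y => f (0, y)) (hf 0).2 with hσ
    set τ : Equiv.Perm F := Equiv.ofBijective (fun x => f (x, σ.symm 0)) (hf (σ.symm 0)).1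
      with hτ
    have hτ0 : τ 0 = 0 := Equiv.apply_symm_apply σ 0
    have hτs0 : τ.symm 0 = 0 := by rw [Equiv.symm_apply_eq, hτ0]
    set h : F × F → F := fun p => f (τ.symm p.1, σ.symm p.2) with hh
    have hhl : IsLPP h := by
      intro a
      constructor
      · have : (fun x => h (x, a)) = (fun x => f (x, σ.symm a)) ∘ τ.symm := rfl
        rw [this]
        exact ((hf (σ.symm a)).1).comp τ.symm.bijective
      · have : (fun y => h (a, y)) = (fun y => f (τ.symm a, y)) ∘ σ.symm := rfl
        rw [this]
        exact ((hf (τ.symm a)).2).comp σ.symm.bijective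
    have hhr : IsReducedLPP h := by
      constructor
      · intro x
        exact Equiv.apply_symm_apply τ x
      · intro y
        show f (τ.symm 0, σ.symm y) = y
        rw [hτs0]
        exact Equiv.apply_symm_apply σ y
    refine ⟨⟨σ, ⟨τ, hτ0⟩, ⟨h, hhl, hhr⟩⟩, ?_⟩
    apply Subtype.ext
    funext p
    simp [lppComp, hh]

end Aux

/-- For a finite field `F` with `q` elements, the number of
LPPs over `F` equals `q! · (q-1)!` times the number of reduced LPPs over `F`. -/
theorem stmt_7 {F : Type*} [Field F] [Fintype F] :
    Nat.card {f : F × F → F | IsLPP f} =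
      (Fintype.card F).factorial * (Fintype.card F - 1).factorial *
        Nat.card {f : F × F → F | IsLPP f ∧ IsReducedLPP f} := by
  classical
  have key := Nat.card_eq_of_bijective _ (lppComp_bijective (F := F))
  rw [Nat.card_prod, Nat.card_prod] at key
  have h1 : Nat.card (Equiv.Perm F) = (Fintype.card F).factorial := by
    rw [Nat.card_eq_fintype_card, Fintype.card_perm]
  have h2 : Nat.card {τ : Equiv.Perm F // τ 0 = 0} = (Fintype.card F - 1).factorial := by
    have e1 : Equiv.Perm {x : F // x ≠ 0} ≃ {τ : Equiv.Perm F // τ 0 = 0} :=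
      (Equiv.Perm.subtypeEquivSubtypePerm (fun x : F => x ≠ 0)).trans
        (Equiv.subtypeEquivRight (by
          intro τ
          constructor
          · intro hτ; exact hτ 0 (by simp)
          · intro hτ a ha
            have : a = 0 := by simpa using ha
            rw [this, hτ]))
    rw [← Nat.card_congr e1, Nat.card_eq_fintype_card, Fintype.card_perm]
    congr 1
    have : Fintype.card {x : F // x ≠ 0} = Fintype.card F - Fintype.card {x : F // x = 0} :=
      Fintype.card_subtype_compl _
    rw [this, Fintype.card_subtype_eq]
  show Nat.card {f : F × F → F // IsLPP f} = _
  rw [← key, h1, h2, mul_assoc]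
  rfl
end

section
/- Let F₄ be the finite field with four elements. A local permutation polynomial f over F₄ is isotopic to the LPP (x,y) ↦ x + y if and only if there exist functions u, v : F₄ → F₄ such that f(x,y) = u(x) + v(y) for all x, y (i.e., if and only if f has separate variables). -/
noncomputable instance : Fintype F₄ := Fintype.ofFinite _
noncomputable instance : DecidableEq F₄ := Classical.decEq _

lemma F4_card : Fintype.card F₄ = 4 := by
  have h := GaloisField.card 2 2 (by norm_num)
  rw [Nat.card_eq_fintype_card] at h
  simpa using h

lemma F4_char (x : F₄) : x + x = 0 := CharTwo.add_self_eq_zero x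

lemma F4_sum_univ : (∑ x : F₄, x) = 0 := by
  obtain ⟨a, ha⟩ : ∃ a : F₄, a ∈ Finset.univ \ {0, 1} := by
    apply Finset.card_pos.mp
    have hsub : ({0, 1} : Finset F₄) ⊆ Finset.univ := Finset.subset_univ _
    rw [Finset.card_sdiff_of_subset hsub, Finset.card_univ, F4_card]
    have h1 : ({0, 1} : Finset F₄).card ≤ 2 :=
      (Finset.card_insert_le _ _).trans (by simp)
    omega
  simp only [Finset.mem_sdiff, Finset.mem_insert, Finset.mem_singleton] at ha
  obtain ⟨-, ha'⟩ := ha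
  push_neg at ha'
  obtain ⟨ha0, ha1⟩ := ha'
  have h1 : (∑ x : F₄, a * x) = ∑ x : F₄, x :=
    Fintype.sum_bijective _ (Equiv.mulLeft₀ a ha0).bijective _ _ (fun x => rfl)
  rw [← Finset.mul_sum] at h1
  have h2 : (a - 1) * (∑ x : F₄, x) = 0 := by
    rw [sub_mul, one_mul, h1, sub_self]
  rcases mul_eq_zero.mp h2 with h | h
  · exact absurd (sub_eq_zero.mp h) ha1
  · exact h

/-- key lemma: injective maps preserve 4-term vanishing sums over F₄ -/
lemma key (σ : F₄ → F₄) (hσ : Function.Injective σ) (p q r s : F₄)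
    (h : p + q + r + s = 0) : σ p + σ q + σ r + σ s = 0 := by
  have cancel : ∀ x y : F₄, x + y = 0 → x = y := fun x y hxy => by
    linear_combination hxy - F4_char y
  by_cases hpq : p = q
  · have hrs : r = s := cancel r s (by subst hpq; linear_combination h - F4_char p)
    subst hpq hrs
    rw [F4_char, zero_add, F4_char]
  by_cases hpr : p = r
  · have hqs : q = s := cancel q s (by subst hpr; linear_combination h - F4_char p)
    subst hpr hqs
    linear_combination F4_char (σ p) + F4_char (σ q)
  by_cases hps : p = s
  · have hqr : q = r := cancel q r (by subst hps; linear_combination h - F4_char p)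
    subst hps hqr
    linear_combination F4_char (σ p) + F4_char (σ q)
  by_cases hqr : q = r
  · exact absurd (cancel p s (by subst hqr; linear_combination h - F4_char q)) hps
  by_cases hqs : q = s
  · exact absurd (cancel p r (by subst hqs; linear_combination h - F4_char q)) hpr
  by_cases hrs : r = s
  · exact absurd (cancel p q (by subst hrs; linear_combination h - F4_char r)) hpq
  have n1 : σ p ≠ σ q := fun hh => hpq (hσ hh)
  have n2 : σ p ≠ σ r := fun hh => hpr (hσ hh)
  have n3 : σ p ≠ σ s := fun hh => hps (hσ hh)
  have n4 : σ q ≠ σ r := fun hh => hqr (hσ hh)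
  have n5 : σ q ≠ σ s := fun hh => hqs (hσ hh)
  have n6 : σ r ≠ σ s := fun hh => hrs (hσ hh)
  have hset : ({σ p, σ q, σ r, σ s} : Finset F₄) = Finset.univ := by
    apply Finset.eq_univ_of_card
    rw [F4_card]
    simp [Finset.card_insert_of_notMem, n1, n2, n3, n4, n5, n6]
  have hsum := F4_sum_univ
  rw [← hset] at hsum
  rw [Finset.sum_insert (by simp [n1, n2, n3]),
      Finset.sum_insert (by simp [n4, n5]),
      Finset.sum_insert (by simp [n6]), Finset.sum_singleton] at hsum
  linear_combination hsum

/-- `f` is isotopic to `g` if there are bijections `h₁, h₂, h₃` with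
`g (h₁ x, h₂ y) = h₃ (f (x, y))` for all `x, y`. -/
def Isotopic {F : Type*} (f g : F × F → F) : Prop :=
  ∃ h₁ h₂ h₃ : F → F, Function.Bijective h₁ ∧ Function.Bijective h₂ ∧
    Function.Bijective h₃ ∧ ∀ x y : F, g (h₁ x, h₂ y) = h₃ (f (x, y))

/-- An LPP `f` over `F₄` is isotopic to `(x,y) ↦ x + y`
if and only if `f` has separate variables. -/
theorem stmt_10 (f : F₄ × F₄ → F₄) (hf : IsLPP f) :
    Isotopic f (fun p => p.1 + p.2) ↔
      ∃ u v : F₄ → F₄, ∀ x y : F₄, f (x, y) = u x + v y := by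
  constructor
  · rintro ⟨h₁, h₂, h₃, hb1, hb2, hb3, heq⟩
    set e := Equiv.ofBijective h₃ hb3 with he
    have hf' : ∀ x y : F₄, f (x, y) = e.symm (h₁ x + h₂ y) := by
      intro x y
      have h0 : h₁ x + h₂ y = e (f (x, y)) := heq x y
      rw [h0, Equiv.symm_apply_apply]
    refine ⟨fun x => e.symm (h₁ x + h₂ 0) + e.symm (h₁ 0 + h₂ 0),
      fun y => e.symm (h₁ 0 + h₂ y), fun x y => ?_⟩
    have hk := key e.symm e.symm.injective (h₁ x + h₂ y) (h₁ x + h₂ 0)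
      (h₁ 0 + h₂ y) (h₁ 0 + h₂ 0)
      (by linear_combination F4_char (h₁ x) + F4_char (h₁ 0) + F4_char (h₂ y) + F4_char (h₂ 0))
    rw [hf' x y]
    linear_combination hk - F4_char (e.symm (h₁ x + h₂ 0)) - F4_char (e.symm (h₁ 0 + h₂ y))
      - F4_char (e.symm (h₁ 0 + h₂ 0))
  · rintro ⟨u, v, huv⟩
    have hu : Function.Bijective u := by
      have h1 : (fun x : F₄ => f (x, 0)) = (fun t => t - v 0) ∘ u := by
        funext x
        simp only [huv, Function.comp_apply]
        linear_combination F4_char (v 0)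
      have h2 := (hf 0).1
      rw [h1] at h2
      exact (Function.Bijective.of_comp_iff' (Equiv.subRight (v 0)).bijective u).mp h2
    have hv : Function.Bijective v := by
      have h1 : (fun y : F₄ => f (0, y)) = (fun t => t - u 0) ∘ v := by
        funext y
        simp only [huv, Function.comp_apply]
        linear_combination F4_char (u 0)
      have h2 := (hf 0).2
      rw [h1] at h2
      exact (Function.Bijective.of_comp_iff' (Equiv.subRight (u 0)).bijective v).mp h2
    exact ⟨u, v, id, hu, hv, Function.bijective_id, fun x y => by simp [huv]⟩
end

section
/- Let F₄ be the finite field with four elements. Every LPP f over F₄ that does not have separate variables (i.e., there are no functions u, v : F₄ → F₄ with f(x,y) = u(x) + v(y) for all x, y) is isotopic to the LPP g₁(x,y) = (xy + x + y + 1)xy + x + y. In particular, any two LPPs over F₄ without separate variables are isotopic to each other. -/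
/-- `f` has separate variables if `f (x, y) = u x + v y` for some `u, v`. -/
def SepVar {F : Type*} [Add F] (f : F × F → F) : Prop :=
  ∃ u v : F → F, ∀ x y : F, f (x, y) = u x + v y

namespace Stmt14aux

def K : Fin 4 → Fin 4 → Fin 4 := fun i j =>
  if i = 0 then j else if j = 0 then i else
  if i = 1 then (if j = 1 then 0 else if j = 2 then 3 else 2) else
  if i = 2 then (if j = 1 then 3 else if j = 2 then 0 else 1) else
  (if j = 1 then 2 else if j = 2 then 1 else 0)

def C1 : Fin 4 → Fin 4 → Fin 4 := fun i j =>
  if i = 0 then j else if j = 0 then i else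
  if i = 1 then (if j = 1 then 0 else if j = 2 then 3 else 2) else
  if i = 2 then (if j = 1 then 3 else if j = 2 then 1 else 0) else
  (if j = 1 then 2 else if j = 2 then 0 else 1)

def C2 : Fin 4 → Fin 4 → Fin 4 := fun i j =>
  if i = 0 then j else if j = 0 then i else
  if i = 1 then (if j = 1 then 2 else if j = 2 then 3 else 0) else
  if i = 2 then (if j = 1 then 3 else if j = 2 then 0 else 1) else
  (if j = 1 then 0 else if j = 2 then 1 else 2)

def C3 : Fin 4 → Fin 4 → Fin 4 := fun i j =>
  if i = 0 then j else if j = 0 then i else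
  if i = 1 then (if j = 1 then 3 else if j = 2 then 0 else 2) else
  if i = 2 then (if j = 1 then 0 else if j = 2 then 3 else 1) else
  (if j = 1 then 2 else if j = 2 then 1 else 0)

def swapfn (c x : Fin 4) : Fin 4 := if x = 0 then c else if x = c then 0 else x

lemma swap_bij : ∀ c, Function.Bijective (swapfn c) := by decide
lemma swap_invol : ∀ c x, swapfn c (swapfn c x) = x := by decide
lemma swap_zero : ∀ c, swapfn c 0 = c := by decide
lemma swapK : ∀ c x y, swapfn c (K x y) =
    K (swapfn c x) (K (swapfn c y) (swapfn c 0)) := by decide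

lemma iso_trans {F : Type*} {f g h : F × F → F} (h1 : Isotopic f g) (h2 : Isotopic g h) :
    Isotopic f h := by
  obtain ⟨a1, a2, a3, b1, b2, b3, hab⟩ := h1
  obtain ⟨c1, c2, c3, d1, d2, d3, hcd⟩ := h2
  exact ⟨c1 ∘ a1, c2 ∘ a2, c3 ∘ a3, d1.comp b1, d2.comp b2, d3.comp b3,
    fun x y => by simpa [Function.comp] using (hcd (a1 x) (a2 y)).trans (congrArg c3 (hab x y))⟩

lemma iso_symm {F : Type*} {f g : F × F → F} (h : Isotopic f g) : Isotopic g f := by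
  obtain ⟨a1, a2, a3, b1, b2, b3, hab⟩ := h
  let e1 := Equiv.ofBijective a1 b1
  let e2 := Equiv.ofBijective a2 b2
  let e3 := Equiv.ofBijective a3 b3
  refine ⟨e1.symm, e2.symm, e3.symm, e1.symm.bijective, e2.symm.bijective,
    e3.symm.bijective, fun x y => ?_⟩
  have h1 : g (x, y) = e3 (f (e1.symm x, e2.symm y)) := by
    have := hab (e1.symm x) (e2.symm y)
    rw [show a1 (e1.symm x) = x from e1.apply_symm_apply x,
        show a2 (e2.symm y) = y from e2.apply_symm_apply y] at this
    exact this
  rw [h1, Equiv.symm_apply_apply]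

set_option synthInstance.maxSize 4000 in
set_option synthInstance.maxHeartbeats 1000000 in
set_option maxHeartbeats 1000000 in
set_option maxRecDepth 10000 in
lemma enum9 : ∀ r s t : Fin 4,
    (r ≠ 1 ∧ s ≠ 1 ∧ t ≠ 1 ∧ s ≠ 2 ∧ t ≠ 3 ∧ r ≠ s ∧ r ≠ t ∧ s ≠ t) →
    ∀ u p : Fin 4,
    (u ≠ 1 ∧ p ≠ 1 ∧ u ≠ 2 ∧ p ≠ 3 ∧ r ≠ u ∧ r ≠ p ∧ u ≠ p) →
    ∀ v w : Fin 4,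
    (v ≠ 2 ∧ w ≠ 2 ∧ u ≠ v ∧ u ≠ w ∧ v ≠ w ∧ s ≠ v ∧ t ≠ w ∧ w ≠ 3) →
    ∀ q z : Fin 4,
    (q ≠ 3 ∧ z ≠ 3 ∧ p ≠ q ∧ p ≠ z ∧ q ≠ z ∧ s ≠ q ∧ v ≠ q ∧ q ≠ 2 ∧ t ≠ z ∧ w ≠ z) →
    ((r,s,t,u,v,w,p,q,z) = (0,3,2,3,0,1,2,1,0) ∨
     (r,s,t,u,v,w,p,q,z) = (0,3,2,3,1,0,2,0,1) ∨
     (r,s,t,u,v,w,p,q,z) = (2,3,0,3,0,1,0,1,2) ∨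
     (r,s,t,u,v,w,p,q,z) = (3,0,2,0,3,1,2,1,0)) := by decide

def th2 : Fin 4 → Fin 4 := fun x => if x = 1 then 2 else if x = 2 then 1 else x
def th3 : Fin 4 → Fin 4 := fun x => if x = 0 then 0 else if x = 1 then 2 else if x = 2 then 3 else 1

lemma isoC2C1 : Isotopic (fun p : Fin 4 × Fin 4 => C2 p.1 p.2) (fun p => C1 p.1 p.2) :=
  ⟨th2, th2, th2, by decide, by decide, by decide, by decide⟩

lemma isoC3C1 : Isotopic (fun p : Fin 4 × Fin 4 => C3 p.1 p.2) (fun p => C1 p.1 p.2) :=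
  ⟨th3, th3, th3, by decide, by decide, by decide, by decide⟩

theorem main (f : Fin 4 × Fin 4 → Fin 4) (hL : IsLPP f) :
    (∃ u v : Fin 4 → Fin 4, ∀ x y, f (x, y) = K (u x) (v y)) ∨
    Isotopic f (fun p => C1 p.1 p.2) := by
  set A : Fin 4 ≃ Fin 4 := Equiv.ofBijective (fun x => f (x, 0)) (hL 0).1 with hA
  set B : Fin 4 ≃ Fin 4 := Equiv.ofBijective (fun y => f (0, y)) (hL 0).2 with hB
  set b : Fin 4 := f (0, 0) with hb
  set g2 : Fin 4 → Fin 4 → Fin 4 :=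
    fun x y => swapfn b (f (A.symm (swapfn b x), B.symm (swapfn b y))) with hg2
  have hAs : ∀ x, f (A.symm x, 0) = x := fun x => A.apply_symm_apply x
  have hBs : ∀ y, f (0, B.symm y) = y := fun y => B.apply_symm_apply y
  have hAb : A.symm b = 0 := A.symm_apply_eq.mpr rfl
  have hBb : B.symm b = 0 := B.symm_apply_eq.mpr rfl
  have hg20 : ∀ x, g2 x 0 = x := by
    intro x
    show swapfn b (f (A.symm (swapfn b x), B.symm (swapfn b 0))) = x
    rw [swap_zero b, hBb, hAs, swap_invol]
  have h0g2 : ∀ y, g2 0 y = y := by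
    intro y
    show swapfn b (f (A.symm (swapfn b 0), B.symm (swapfn b y))) = y
    rw [swap_zero b, hAb, hBs, swap_invol]
  have hneR : ∀ (x y y' : Fin 4), y ≠ y' → g2 x y ≠ g2 x y' := by
    intro x y y' hne heq
    apply hne
    have h1 := (swap_bij b).injective heq
    have h2 := (hL (A.symm (swapfn b x))).2.injective h1
    exact (swap_bij b).injective (B.symm.injective h2)
  have hneC : ∀ (x x' y : Fin 4), x ≠ x' → g2 x y ≠ g2 x' y := by
    intro x x' y hne heq
    apply hne
    have h1 := (swap_bij b).injective heq
    have h2 := (hL (B.symm (swapfn b y))).1.injective h1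
    exact (swap_bij b).injective (A.symm.injective h2)
  have hisoEq : ∀ x y, g2 (swapfn b (A x)) (swapfn b (B y)) = swapfn b (f (x, y)) := by
    intro x y
    show swapfn b (f (A.symm (swapfn b (swapfn b (A x))),
      B.symm (swapfn b (swapfn b (B y))))) = swapfn b (f (x, y))
    rw [swap_invol, swap_invol, A.symm_apply_apply, B.symm_apply_apply]
  have hiso : Isotopic f (fun p => g2 p.1 p.2) :=
    ⟨fun x => swapfn b (A x), fun y => swapfn b (B y), swapfn b,
      (swap_bij b).comp A.bijective, (swap_bij b).comp B.bijective, swap_bij b,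
      fun x y => hisoEq x y⟩
  rcases enum9 (g2 1 1) (g2 1 2) (g2 1 3)
      ⟨(by have h := hneR 1 1 0 (by decide); rwa [hg20] at h), (by have h := hneR 1 2 0 (by decide); rwa [hg20] at h), (by have h := hneR 1 3 0 (by decide); rwa [hg20] at h), (by have h := hneC 1 0 2 (by decide); rwa [h0g2] at h), (by have h := hneC 1 0 3 (by decide); rwa [h0g2] at h), (hneR 1 1 2 (by decide)), (hneR 1 1 3 (by decide)), (hneR 1 2 3 (by decide))⟩
      (g2 2 1) (g2 3 1)
      ⟨(by have h := hneC 2 0 1 (by decide); rwa [h0g2] at h), (by have h := hneC 3 0 1 (by decide); rwa [h0g2] at h), (by have h := hneR 2 1 0 (by decide); rwa [hg20] at h), (by have h := hneR 3 1 0 (by decide); rwa [hg20] at h), (hneC 1 2 1 (by decide)), (hneC 1 3 1 (by decide)), (hneC 2 3 1 (by decide))⟩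
      (g2 2 2) (g2 2 3)
      ⟨(by have h := hneR 2 2 0 (by decide); rwa [hg20] at h), (by have h := hneR 2 3 0 (by decide); rwa [hg20] at h), (hneR 2 1 2 (by decide)), (hneR 2 1 3 (by decide)), (hneR 2 2 3 (by decide)), (hneC 1 2 2 (by decide)), (hneC 1 2 3 (by decide)), (by have h := hneC 2 0 3 (by decide); rwa [h0g2] at h)⟩
      (g2 3 2) (g2 3 3)
      ⟨(by have h := hneR 3 2 0 (by decide); rwa [hg20] at h), (by have h := hneR 3 3 0 (by decide); rwa [hg20] at h), (hneR 3 1 2 (by decide)), (hneR 3 1 3 (by decide)), (hneR 3 2 3 (by decide)), (hneC 1 3 2 (by decide)), (hneC 2 3 2 (by decide)), (by have h := hneC 3 0 2 (by decide); rwa [h0g2] at h), (hneC 1 3 3 (by decide)), (hneC 2 3 3 (by decide))⟩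
    with hc | hc | hc | hc
  all_goals (
    simp only [Prod.mk.injEq] at hc
    obtain ⟨e11, e12, e13, e21, e22, e23, e31, e32, e33⟩ := hc)
  · -- Klein case
    have hKtab : ∀ x y, g2 x y = K x y := by
      intro x y
      fin_cases x <;> fin_cases y
      · exact h0g2 0
      · exact h0g2 1
      · exact h0g2 2
      · exact h0g2 3
      · exact hg20 1
      · exact e11
      · exact e12
      · exact e13
      · exact hg20 2
      · exact e21
      · exact e22
      · exact e23
      · exact hg20 3
      · exact e31
      · exact e32
      · exact e33
    left
    refine ⟨fun x => A x, fun y => K (B y) b, fun x y => ?_⟩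
    have h2 : f (x, y) = swapfn b (K (swapfn b (A x)) (swapfn b (B y))) := by
      rw [← hKtab, hisoEq, swap_invol]
    rw [h2, swapK, swap_invol, swap_invol, swap_zero]
  · -- C1 case
    have htab : ∀ x y, g2 x y = C1 x y := by
      intro x y
      fin_cases x <;> fin_cases y
      · exact h0g2 0
      · exact h0g2 1
      · exact h0g2 2
      · exact h0g2 3
      · exact hg20 1
      · exact e11
      · exact e12
      · exact e13
      · exact hg20 2
      · exact e21
      · exact e22
      · exact e23
      · exact hg20 3
      · exact e31
      · exact e32
      · exact e33
    right
    have heq : (fun p : Fin 4 × Fin 4 => g2 p.1 p.2) = (fun p => C1 p.1 p.2) := by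
      funext p; exact htab p.1 p.2
    rwa [heq] at hiso
  · -- C2 case
    have htab : ∀ x y, g2 x y = C2 x y := by
      intro x y
      fin_cases x <;> fin_cases y
      · exact h0g2 0
      · exact h0g2 1
      · exact h0g2 2
      · exact h0g2 3
      · exact hg20 1
      · exact e11
      · exact e12
      · exact e13
      · exact hg20 2
      · exact e21
      · exact e22
      · exact e23
      · exact hg20 3
      · exact e31
      · exact e32
      · exact e33
    right
    have heq : (fun p : Fin 4 × Fin 4 => g2 p.1 p.2) = (fun p => C2 p.1 p.2) := by
      funext p; exact htab p.1 p.2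
    rw [heq] at hiso
    exact iso_trans hiso isoC2C1
  · -- C3 case
    have htab : ∀ x y, g2 x y = C3 x y := by
      intro x y
      fin_cases x <;> fin_cases y
      · exact h0g2 0
      · exact h0g2 1
      · exact h0g2 2
      · exact h0g2 3
      · exact hg20 1
      · exact e11
      · exact e12
      · exact e13
      · exact hg20 2
      · exact e21
      · exact e22
      · exact e23
      · exact hg20 3
      · exact e31
      · exact e32
      · exact e33
    right
    have heq : (fun p : Fin 4 × Fin 4 => g2 p.1 p.2) = (fun p => C3 p.1 p.2) := by
      funext p; exact htab p.1 p.2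
    rw [heq] at hiso
    exact iso_trans hiso isoC3C1

end Stmt14aux

section Transfer

open Stmt14aux

theorem part1 (f : F₄ × F₄ → F₄) (hf : IsLPP f) (hns : ¬ SepVar f) :
    Isotopic f (fun p : F₄ × F₄ =>
      (p.1 * p.2 + p.1 + p.2 + 1) * p.1 * p.2 + p.1 + p.2) := by
  haveI : Fintype F₄ := Fintype.ofFinite F₄
  haveI : DecidableEq F₄ := Classical.decEq F₄
  have hcard : Fintype.card F₄ = 4 := by
    have h := GaloisField.card 2 2 (by norm_num)
    rw [Nat.card_eq_fintype_card] at h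
    simpa using h
  have htwo : (2 : F₄) = 0 := by
    have h := CharP.cast_eq_zero F₄ 2
    simpa using h
  obtain ⟨a, ha0, ha1⟩ : ∃ a : F₄, a ≠ 0 ∧ a ≠ 1 := by
    by_contra hcon
    push_neg at hcon
    have hsub : (Finset.univ : Finset F₄) ⊆ ({0, 1} : Finset F₄) := by
      intro x _
      rcases eq_or_ne x 0 with h | h
      · simp [h]
      · simp [hcon x h]
    have hle := Finset.card_le_card hsub
    rw [Finset.card_univ, hcard] at hle
    have h2 : ({0, 1} : Finset F₄).card ≤ 2 :=
      (Finset.card_insert_le _ _).trans (by simp)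
    omega
  have ha3 : a ^ 3 = 1 := by
    have h := FiniteField.pow_card_sub_one_eq_one a ha0
    rw [hcard] at h
    norm_num at h
    exact h
  have ha2 : a ^ 2 = a + 1 := by
    have hne : a + 1 ≠ 0 := fun h => ha1 (by linear_combination h - htwo)
    have key : (a + 1) * (a ^ 2 + a + 1) = 0 := by
      linear_combination ha3 + (a ^ 2 + a + 1) * htwo
    rcases mul_eq_zero.1 key with h | h
    · exact absurd h hne
    · linear_combination h - (a + 1) * htwo
  set E : Fin 4 → F₄ := fun i => if i = 0 then 0 else if i = 1 then 1 else if i = 2 then a else a + 1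
    with hE
  have hd01 : (0 : F₄) ≠ 1 := zero_ne_one
  have hd0a : (0 : F₄) ≠ a := Ne.symm ha0
  have hd0a1 : (0 : F₄) ≠ a + 1 := fun h => ha1 (by linear_combination -h - htwo)
  have hd1a : (1 : F₄) ≠ a := Ne.symm ha1
  have hd1a1 : (1 : F₄) ≠ a + 1 := fun h => ha0 (by linear_combination -h)
  have hda : a ≠ a + 1 := fun h => hd01 (by linear_combination h)
  have hEinj : Function.Injective E := by
    intro i j h
    fin_cases i <;> fin_cases j <;>
      first
        | rfl
        | exact absurd h (by first
            | exact hd01 | exact hd0a | exact hd0a1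
            | exact hd1a | exact hd1a1 | exact hda
            | exact Ne.symm hd01 | exact Ne.symm hd0a | exact Ne.symm hd0a1
            | exact Ne.symm hd1a | exact Ne.symm hd1a1 | exact Ne.symm hda)
  have hEbij : Function.Bijective E :=
    (Fintype.bijective_iff_injective_and_card E).2 ⟨hEinj, by simp [hcard]⟩
  set e : Fin 4 ≃ F₄ := Equiv.ofBijective E hEbij with he
  have hEK : ∀ i j, e (Stmt14aux.K i j) = e i + e j := by
    intro i j
    fin_cases i <;> fin_cases j
    · show (0 : F₄) = (0 : F₄) + (0 : F₄)
      ring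
    · show (1 : F₄) = (0 : F₄) + (1 : F₄)
      ring
    · show a = (0 : F₄) + a
      ring
    · show (a + 1) = (0 : F₄) + (a + 1)
      ring
    · show (1 : F₄) = (1 : F₄) + (0 : F₄)
      ring
    · show (0 : F₄) = (1 : F₄) + (1 : F₄)
      linear_combination ((-1 : F₄)) * htwo
    · show (a + 1) = (1 : F₄) + a
      ring
    · show a = (1 : F₄) + (a + 1)
      linear_combination ((-1 : F₄)) * htwo
    · show a = a + (0 : F₄)
      ring
    · show (a + 1) = a + (1 : F₄)
      ring
    · show (0 : F₄) = a + a
      linear_combination ((-1 : F₄) * a) * htwo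
    · show (1 : F₄) = a + (a + 1)
      linear_combination ((-1 : F₄) * a) * htwo
    · show (a + 1) = (a + 1) + (0 : F₄)
      ring
    · show a = (a + 1) + (1 : F₄)
      linear_combination ((-1 : F₄)) * htwo
    · show (1 : F₄) = (a + 1) + a
      linear_combination ((-1 : F₄) * a) * htwo
    · show (0 : F₄) = (a + 1) + (a + 1)
      linear_combination ((-1 : F₄) * a + (-1 : F₄)) * htwo
  have hEC1 : ∀ i j, e (Stmt14aux.C1 i j) =
      (e i * e j + e i + e j + 1) * e i * e j + e i + e j := by
    intro i j
    fin_cases i <;> fin_cases j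
    · show (0 : F₄) = ((0 : F₄) * (0 : F₄) + (0 : F₄) + (0 : F₄) + 1) * (0 : F₄) * (0 : F₄) + (0 : F₄) + (0 : F₄)
      ring
    · show (1 : F₄) = ((0 : F₄) * (1 : F₄) + (0 : F₄) + (1 : F₄) + 1) * (0 : F₄) * (1 : F₄) + (0 : F₄) + (1 : F₄)
      ring
    · show a = ((0 : F₄) * a + (0 : F₄) + a + 1) * (0 : F₄) * a + (0 : F₄) + a
      ring
    · show (a + 1) = ((0 : F₄) * (a + 1) + (0 : F₄) + (a + 1) + 1) * (0 : F₄) * (a + 1) + (0 : F₄) + (a + 1)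
      ring
    · show (1 : F₄) = ((1 : F₄) * (0 : F₄) + (1 : F₄) + (0 : F₄) + 1) * (1 : F₄) * (0 : F₄) + (1 : F₄) + (0 : F₄)
      ring
    · show (0 : F₄) = ((1 : F₄) * (1 : F₄) + (1 : F₄) + (1 : F₄) + 1) * (1 : F₄) * (1 : F₄) + (1 : F₄) + (1 : F₄)
      linear_combination ((-3 : F₄)) * htwo
    · show (a + 1) = ((1 : F₄) * a + (1 : F₄) + a + 1) * (1 : F₄) * a + (1 : F₄) + a
      linear_combination ((-2 : F₄)) * ha2 + ((-2 : F₄) * a + (-1 : F₄)) * htwo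
    · show a = ((1 : F₄) * (a + 1) + (1 : F₄) + (a + 1) + 1) * (1 : F₄) * (a + 1) + (1 : F₄) + (a + 1)
      linear_combination ((-2 : F₄)) * ha2 + ((-4 : F₄) * a + (-4 : F₄)) * htwo
    · show a = (a * (0 : F₄) + a + (0 : F₄) + 1) * a * (0 : F₄) + a + (0 : F₄)
      ring
    · show (a + 1) = (a * (1 : F₄) + a + (1 : F₄) + 1) * a * (1 : F₄) + a + (1 : F₄)
      linear_combination ((-2 : F₄)) * ha2 + ((-2 : F₄) * a + (-1 : F₄)) * htwo
    · show (1 : F₄) = (a * a + a + a + 1) * a * a + a + a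
      linear_combination ((-1 : F₄) * a ^ 2 + (-3 : F₄) * a + (-5 : F₄)) * ha2 + ((-5 : F₄) * a + (-2 : F₄)) * htwo
    · show (0 : F₄) = (a * (a + 1) + a + (a + 1) + 1) * a * (a + 1) + a + (a + 1)
      linear_combination ((-1 : F₄) * a ^ 2 + (-5 : F₄) * a + (-11 : F₄)) * ha2 + ((-10 : F₄) * a + (-6 : F₄)) * htwo
    · show (a + 1) = ((a + 1) * (0 : F₄) + (a + 1) + (0 : F₄) + 1) * (a + 1) * (0 : F₄) + (a + 1) + (0 : F₄)
      ring
    · show a = ((a + 1) * (1 : F₄) + (a + 1) + (1 : F₄) + 1) * (a + 1) * (1 : F₄) + (a + 1) + (1 : F₄)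
      linear_combination ((-2 : F₄)) * ha2 + ((-4 : F₄) * a + (-4 : F₄)) * htwo
    · show (0 : F₄) = ((a + 1) * a + (a + 1) + a + 1) * (a + 1) * a + (a + 1) + a
      linear_combination ((-1 : F₄) * a ^ 2 + (-5 : F₄) * a + (-11 : F₄)) * ha2 + ((-10 : F₄) * a + (-6 : F₄)) * htwo
    · show (1 : F₄) = ((a + 1) * (a + 1) + (a + 1) + (a + 1) + 1) * (a + 1) * (a + 1) + (a + 1) + (a + 1)
      linear_combination ((-1 : F₄) * a ^ 2 + (-7 : F₄) * a + (-21 : F₄)) * ha2 + ((-21 : F₄) * a + (-13 : F₄)) * htwo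
  set f' : Fin 4 × Fin 4 → Fin 4 := fun p => e.symm (f (e p.1, e p.2)) with hf'
  have hLPP' : IsLPP f' := by
    intro c
    constructor
    · exact (e.symm.bijective.comp (hf (e c)).1).comp e.bijective
    · exact (e.symm.bijective.comp (hf (e c)).2).comp e.bijective
  have hfix : ∀ x y : F₄, f' (e.symm x, e.symm y) = e.symm (f (x, y)) := by
    intro x y
    show e.symm (f (e (e.symm x), e (e.symm y))) = e.symm (f (x, y))
    rw [Equiv.apply_symm_apply, Equiv.apply_symm_apply]
  rcases Stmt14aux.main f' hLPP' with ⟨u, v, huv⟩ | hiso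
  · exfalso
    apply hns
    refine ⟨fun x => e (u (e.symm x)), fun y => e (v (e.symm y)), fun x y => ?_⟩
    calc f (x, y) = e (e.symm (f (x, y))) := (e.apply_symm_apply _).symm
      _ = e (f' (e.symm x, e.symm y)) := by rw [hfix]
      _ = e (Stmt14aux.K (u (e.symm x)) (v (e.symm y))) := by rw [huv]
      _ = _ := hEK _ _
  · obtain ⟨h1, h2, h3, b1, b2, b3, hh⟩ := hiso
    refine ⟨fun x => e (h1 (e.symm x)), fun y => e (h2 (e.symm y)),
      fun z => e (h3 (e.symm z)),
      (e.bijective.comp b1).comp e.symm.bijective,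
      (e.bijective.comp b2).comp e.symm.bijective,
      (e.bijective.comp b3).comp e.symm.bijective,
      fun x y => ?_⟩
    have h := congrArg e (hh (e.symm x) (e.symm y))
    rw [hEC1, hfix] at h
    exact h

end Transfer

/-- Every LPP over `F₄` without separate variables is
isotopic to `g₁ (x, y) = (xy + x + y + 1)xy + x + y`; in particular, any two
LPPs over `F₄` without separate variables are isotopic to each other. -/
theorem stmt_14 :
    (∀ f : F₄ × F₄ → F₄, IsLPP f → ¬ SepVar f →
      Isotopic f (fun p : F₄ × F₄ =>
        (p.1 * p.2 + p.1 + p.2 + 1) * p.1 * p.2 + p.1 + p.2)) ∧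
    (∀ f g : F₄ × F₄ → F₄, IsLPP f → IsLPP g → ¬ SepVar f → ¬ SepVar g →
      Isotopic f g) := by
  constructor
  · exact part1
  · intro f g hf hg hnf hng
    exact Stmt14aux.iso_trans (part1 f hf hnf) (Stmt14aux.iso_symm (part1 g hg hng))
end

section
/- Let F₄ be the finite field with four elements. Two LPPs f and g over F₄ are isotopic if and only if (f has separate variables ↔ g has separate variables). In other words, the set of LPPs over F₄ consists of exactly two isotopism classes: the class of LPPs with separate variables and the class of LPPs without separate variables. -/
namespace Stmt15

abbrev V : Type := ZMod 2 × ZMod 2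

instance (f : V × V → V) : Decidable (IsLPP f) := by unfold IsLPP; infer_instance

/-! ### Generic lemmas on isotopy -/

theorem iso_refl {F : Type*} (f : F × F → F) : Isotopic f f :=
  ⟨id, id, id, Function.bijective_id, Function.bijective_id, Function.bijective_id,
    fun _ _ => rfl⟩

theorem iso_symm {F : Type*} {f g : F × F → F} (h : Isotopic f g) : Isotopic g f := by
  obtain ⟨h1, h2, h3, b1, b2, b3, H⟩ := h
  let E1 := Equiv.ofBijective h1 b1
  let E2 := Equiv.ofBijective h2 b2
  let E3 := Equiv.ofBijective h3 b3
  refine ⟨E1.symm, E2.symm, E3.symm, E1.symm.bijective, E2.symm.bijective,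
    E3.symm.bijective, fun x y => ?_⟩
  have H' := H (E1.symm x) (E2.symm y)
  have hx : h1 (E1.symm x) = x := E1.apply_symm_apply x
  have hy : h2 (E2.symm y) = y := E2.apply_symm_apply y
  rw [hx, hy] at H'
  have : E3.symm (g (x, y)) = E3.symm (h3 (f (E1.symm x, E2.symm y))) := by rw [H']
  rw [this]
  exact (E3.symm_apply_apply _).symm

theorem iso_trans {F : Type*} {f g h : F × F → F} (h1 : Isotopic f g) (h2 : Isotopic g h) :
    Isotopic f h := by
  obtain ⟨a1, a2, a3, ba1, ba2, ba3, HA⟩ := h1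
  obtain ⟨b1, b2, b3, bb1, bb2, bb3, HB⟩ := h2
  exact ⟨b1 ∘ a1, b2 ∘ a2, b3 ∘ a3, bb1.comp ba1, bb2.comp ba2, bb3.comp ba3,
    fun x y => by simp only [Function.comp_apply, HB, HA]⟩

/-- Every LPP is isotopic (in the sense `Isotopic g f`) to a reduced one. -/
theorem exists_reduced {F : Type*} [Zero F] {f : F × F → F} (hf : IsLPP f) :
    ∃ g : F × F → F, Isotopic g f ∧ IsLPP g ∧ (∀ x, g (x, 0) = x) ∧ ∀ y, g (0, y) = y := by
  let S : F ≃ F := Equiv.ofBijective (fun t => f (0, t)) (hf 0).2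
  have hrow : Function.Bijective (fun t : F => f (t, S.symm 0)) := (hf (S.symm 0)).1
  let T : F ≃ F := Equiv.ofBijective (fun t => f (t, S.symm 0)) hrow
  refine ⟨fun p => f (T.symm p.1, S.symm p.2), ⟨T.symm, S.symm, id, T.symm.bijective,
    S.symm.bijective, Function.bijective_id, fun x y => rfl⟩, ?_, ?_, ?_⟩
  · intro a
    constructor
    · have : (fun x => f (T.symm x, S.symm a)) = (fun t => f (t, S.symm a)) ∘ T.symm := rfl
      rw [this]
      exact (hf (S.symm a)).1.comp T.symm.bijective
    · have : (fun y => f (T.symm a, S.symm y)) = (fun t => f (T.symm a, t)) ∘ S.symm := rfl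
      rw [this]
      exact (hf (T.symm a)).2.comp S.symm.bijective
  · intro x
    exact T.apply_symm_apply x
  · intro y
    have hT0 : T (0 : F) = 0 := S.apply_symm_apply 0
    have h00 : T.symm 0 = (0 : F) := (Equiv.symm_apply_eq T).mpr hT0.symm
    show f (T.symm 0, S.symm y) = y
    rw [h00]
    exact S.apply_symm_apply y

/-! ### Decidable facts over `V` -/

set_option maxRecDepth 100000 in
theorem bij_affine : ∀ h : V → V, Function.Bijective h →
    ∀ x y : V, h (x + y) = h x + h y + h 0 := by decide

theorem sum4 : ∀ a b c d : V, a ≠ b → a ≠ c → a ≠ d → b ≠ c → b ≠ d → c ≠ d →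
    d = a + b + c := by decide

theorem vcases : ∀ x : V, x = ((0 : ZMod 2), (0 : ZMod 2)) ∨ x = (0, 1) ∨ x = (1, 0) ∨
    x = (1, 1) := by decide

/-- Separate variables is invariant under isotopy (over `V`). -/
theorem sep_of_iso {f g : V × V → V} (h : Isotopic f g) (hs : SepVar f) : SepVar g := by
  obtain ⟨h1, h2, h3, b1, b2, b3, H⟩ := h
  obtain ⟨u, v, huv⟩ := hs
  let E1 := Equiv.ofBijective h1 b1
  let E2 := Equiv.ofBijective h2 b2
  refine ⟨fun a => h3 (u (E1.symm a)) + h3 0, fun b => h3 (v (E2.symm b)), fun x y => ?_⟩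
  have hx : h1 (E1.symm x) = x := E1.apply_symm_apply x
  have hy : h2 (E2.symm y) = y := E2.apply_symm_apply y
  have H' := H (E1.symm x) (E2.symm y)
  rw [hx, hy, huv] at H'
  rw [H', bij_affine h3 b3]
  ring

/-- A separated LPP is isotopic to addition. -/
theorem sep_iso_add {f : V × V → V} (hf : IsLPP f) (hs : SepVar f) :
    Isotopic (fun p : V × V => p.1 + p.2) f := by
  obtain ⟨u, v, huv⟩ := hs
  have hu : Function.Bijective u := by
    have h0 : Function.Bijective (fun x => f (x, 0)) := (hf 0).1
    have : u = (fun t => t - v 0) ∘ (fun x => f (x, 0)) := by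
      funext x; simp [huv]
    rw [this]
    exact (Equiv.subRight (v 0)).bijective.comp h0
  have hv : Function.Bijective v := by
    have h0 : Function.Bijective (fun y => f (0, y)) := (hf 0).2
    have : v = (fun t => t - u 0) ∘ (fun y => f (0, y)) := by
      funext y; simp [huv]
    rw [this]
    exact (Equiv.subRight (u 0)).bijective.comp h0
  let EU := Equiv.ofBijective u hu
  let EV := Equiv.ofBijective v hv
  refine ⟨EU.symm, EV.symm, id, EU.symm.bijective, EV.symm.bijective,
    Function.bijective_id, fun x y => ?_⟩
  show f (EU.symm x, EV.symm y) = x + y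
  rw [huv]
  have hx : u (EU.symm x) = x := EU.apply_symm_apply x
  have hy : v (EV.symm y) = y := EV.apply_symm_apply y
  rw [hx, hy]

/-! ### Classification of reduced LPPs over V -/

def el (n : ℕ) : V := ((n / 2 : ℕ), (n % 2 : ℕ))

def tab (l : List (List ℕ)) : V × V → V := fun p =>
  el ((l.getD (2 * p.1.1.val + p.1.2.val) []).getD (2 * p.2.1.val + p.2.2.val) 0)

def pm (l : List ℕ) : V → V := fun v => el (l.getD (2 * v.1.val + v.2.val) 0)

def T2 : V × V → V := tab [[0,1,2,3],[1,0,3,2],[2,3,1,0],[3,2,0,1]]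
def T3 : V × V → V := tab [[0,1,2,3],[1,2,3,0],[2,3,0,1],[3,0,1,2]]
def T4 : V × V → V := tab [[0,1,2,3],[1,3,0,2],[2,0,3,1],[3,2,1,0]]

def row (v a b c : V) : V → V := fun y =>
  if y = ((0 : ZMod 2), (0 : ZMod 2)) then v
  else if y = (0, 1) then a
  else if y = (1, 0) then b
  else c

def mkT (a b c d e f : V) : V × V → V := fun p =>
  if p.1 = ((0 : ZMod 2), (0 : ZMod 2)) then p.2
  else if p.1 = (0, 1) then row (0, 1) a b c p.2
  else if p.1 = (1, 0) then row (1, 0) d e f p.2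
  else p.2 + row (0, 1) a b c p.2 + row (1, 0) d e f p.2

set_option maxRecDepth 100000 in
set_option maxHeartbeats 4000000 in
set_option synthInstance.maxSize 2048 in
set_option synthInstance.maxHeartbeats 2000000 in
theorem classify : ∀ a b c d e f : V,
    a ≠ (0, 1) → b ≠ (0, 1) → c ≠ (0, 1) → a ≠ b → a ≠ c → b ≠ c →
    d ≠ (1, 0) → e ≠ (1, 0) → f ≠ (1, 0) → d ≠ e → d ≠ f → e ≠ f →
    IsLPP (mkT a b c d e f) →
    (mkT a b c d e f = (fun p => p.1 + p.2) ∨ mkT a b c d e f = T2 ∨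
      mkT a b c d e f = T3 ∨ mkT a b c d e f = T4) := by decide

set_option maxRecDepth 10000 in
theorem isoT2 : Isotopic T3 T2 :=
  ⟨pm [0,2,1,3], pm [0,2,1,3], pm [0,2,1,3], by decide, by decide, by decide, by decide⟩

set_option maxRecDepth 10000 in
theorem isoT4 : Isotopic T3 T4 :=
  ⟨pm [0,1,3,2], pm [0,1,3,2], pm [0,1,3,2], by decide, by decide, by decide, by decide⟩

theorem nonsep_iso_T3 {f : V × V → V} (hf : IsLPP f) (hs : ¬ SepVar f) : Isotopic T3 f := by
  obtain ⟨g, hgf, hg, hrow, hcol⟩ := exists_reduced hf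
  have hgs : ¬ SepVar g := fun h => hs (sep_of_iso hgf h)
  have h00 : ((0 : ZMod 2), (0 : ZMod 2)) = (0 : V) := rfl
  have hrow' : ∀ x : V, g (x, ((0 : ZMod 2), (0 : ZMod 2))) = x := fun x => by
    rw [h00]; exact hrow x
  have hcol' : ∀ y : V, g (((0 : ZMod 2), (0 : ZMod 2)), y) = y := fun y => by
    rw [h00]; exact hcol y
  have ne_aux : ∀ (r y1 y2 : V), y1 ≠ y2 → g (r, y1) ≠ g (r, y2) :=
    fun r y1 y2 hne hc => hne ((hg r).2.injective hc)
  have key : ∀ y : V, g (((1 : ZMod 2), (1 : ZMod 2)), y) =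
      g (((0 : ZMod 2), (0 : ZMod 2)), y) + g ((0, 1), y) + g ((1, 0), y) := by
    intro y
    have inj : Function.Injective (fun x => g (x, y)) := (hg y).1.injective
    refine sum4 _ _ _ _ ?_ ?_ ?_ ?_ ?_ ?_ <;>
      exact fun hc => absurd (inj hc) (by decide)
  have hgeq : g = mkT (g ((0,1),(0,1))) (g ((0,1),(1,0))) (g ((0,1),(1,1)))
      (g ((1,0),(0,1))) (g ((1,0),(1,0))) (g ((1,0),(1,1))) := by
    funext p
    obtain ⟨x, y⟩ := p
    rcases vcases x with h | h | h | h <;> subst h <;>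
      rcases vcases y with h | h | h | h <;> subst h <;>
      simp only [mkT, row, reduceIte] <;>
      first
        | rfl
        | exact hcol' _
        | exact hrow' _
        | (simp only [key, hcol', hrow']; rfl)
  have hLPP := hg
  rw [hgeq] at hLPP
  have hcls := classify _ _ _ _ _ _
    (fun hc => absurd ((hg (0,1)).2.injective (hc.trans (hrow' (0,1)).symm)) (by decide))
    (fun hc => absurd ((hg (0,1)).2.injective (hc.trans (hrow' (0,1)).symm)) (by decide))
    (fun hc => absurd ((hg (0,1)).2.injective (hc.trans (hrow' (0,1)).symm)) (by decide))
    (ne_aux (0,1) (0,1) (1,0) (by decide))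
    (ne_aux (0,1) (0,1) (1,1) (by decide))
    (ne_aux (0,1) (1,0) (1,1) (by decide))
    (fun hc => absurd ((hg (1,0)).2.injective (hc.trans (hrow' (1,0)).symm)) (by decide))
    (fun hc => absurd ((hg (1,0)).2.injective (hc.trans (hrow' (1,0)).symm)) (by decide))
    (fun hc => absurd ((hg (1,0)).2.injective (hc.trans (hrow' (1,0)).symm)) (by decide))
    (ne_aux (1,0) (0,1) (1,0) (by decide))
    (ne_aux (1,0) (0,1) (1,1) (by decide))
    (ne_aux (1,0) (1,0) (1,1) (by decide))
    hLPP
  rcases hcls with h | h | h | h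
  · exfalso
    apply hgs
    refine ⟨id, id, fun x y => ?_⟩
    rw [hgeq, h]
    rfl
  · have : Isotopic T3 g := by rw [hgeq, h]; exact isoT2
    exact iso_trans this hgf
  · have : Isotopic T3 g := by rw [hgeq, h]; exact iso_refl T3
    exact iso_trans this hgf
  · have : Isotopic T3 g := by rw [hgeq, h]; exact isoT4
    exact iso_trans this hgf

/-! ### Main theorem over V -/

theorem mainV (f g : V × V → V) (hf : IsLPP f) (hg : IsLPP g) :
    Isotopic f g ↔ (SepVar f ↔ SepVar g) := by
  constructor
  · intro h
    exact ⟨fun hs => sep_of_iso h hs, fun hs => sep_of_iso (iso_symm h) hs⟩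
  · intro hiff
    by_cases hsf : SepVar f
    · have hsg := hiff.mp hsf
      exact iso_trans (iso_symm (sep_iso_add hf hsf)) (sep_iso_add hg hsg)
    · have hsg : ¬ SepVar g := fun h => hsf (hiff.mpr h)
      exact iso_trans (iso_symm (nonsep_iso_T3 hf hsf)) (nonsep_iso_T3 hg hsg)

/-! ### Transfer to F₄ -/

noncomputable def eAdd : F₄ ≃+ V := by
  have h : Module.finrank (ZMod 2) F₄ = Module.finrank (ZMod 2) V := by
    rw [GaloisField.finrank 2 (by norm_num), Module.finrank_prod, Module.finrank_self]
  exact (LinearEquiv.ofFinrankEq F₄ V h).toAddEquiv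

noncomputable def tr (f : F₄ × F₄ → F₄) : V × V → V :=
  fun p => eAdd (f (eAdd.symm p.1, eAdd.symm p.2))

theorem tr_lpp {f : F₄ × F₄ → F₄} (hf : IsLPP f) : IsLPP (tr f) := by
  intro a
  constructor
  · have : (fun x => tr f (x, a)) =
        (⇑eAdd) ∘ (fun t => f (t, eAdd.symm a)) ∘ (⇑eAdd.symm) := rfl
    rw [this]
    exact (eAdd.bijective.comp (hf (eAdd.symm a)).1).comp eAdd.symm.bijective
  · have : (fun y => tr f (a, y)) =
        (⇑eAdd) ∘ (fun t => f (eAdd.symm a, t)) ∘ (⇑eAdd.symm) := rfl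
    rw [this]
    exact (eAdd.bijective.comp (hf (eAdd.symm a)).2).comp eAdd.symm.bijective

theorem tr_iso {f g : F₄ × F₄ → F₄} : Isotopic f g ↔ Isotopic (tr f) (tr g) := by
  constructor
  · rintro ⟨h1, h2, h3, b1, b2, b3, H⟩
    refine ⟨(⇑eAdd) ∘ h1 ∘ (⇑eAdd.symm), (⇑eAdd) ∘ h2 ∘ (⇑eAdd.symm),
      (⇑eAdd) ∘ h3 ∘ (⇑eAdd.symm),
      (eAdd.bijective.comp b1).comp eAdd.symm.bijective,
      (eAdd.bijective.comp b2).comp eAdd.symm.bijective,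
      (eAdd.bijective.comp b3).comp eAdd.symm.bijective, fun x y => ?_⟩
    show eAdd (g (eAdd.symm (eAdd (h1 (eAdd.symm x))), eAdd.symm (eAdd (h2 (eAdd.symm y)))))
      = eAdd (h3 (eAdd.symm (eAdd (f (eAdd.symm x, eAdd.symm y)))))
    rw [eAdd.symm_apply_apply, eAdd.symm_apply_apply, eAdd.symm_apply_apply, H]
  · rintro ⟨h1, h2, h3, b1, b2, b3, H⟩
    refine ⟨(⇑eAdd.symm) ∘ h1 ∘ (⇑eAdd), (⇑eAdd.symm) ∘ h2 ∘ (⇑eAdd),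
      (⇑eAdd.symm) ∘ h3 ∘ (⇑eAdd),
      (eAdd.symm.bijective.comp b1).comp eAdd.bijective,
      (eAdd.symm.bijective.comp b2).comp eAdd.bijective,
      (eAdd.symm.bijective.comp b3).comp eAdd.bijective, fun x y => ?_⟩
    have H' := H (eAdd x) (eAdd y)
    simp only [tr, eAdd.symm_apply_apply] at H'
    show g (eAdd.symm (h1 (eAdd x)), eAdd.symm (h2 (eAdd y))) = eAdd.symm (h3 (eAdd (f (x, y))))
    calc g (eAdd.symm (h1 (eAdd x)), eAdd.symm (h2 (eAdd y)))
        = eAdd.symm (eAdd (g (eAdd.symm (h1 (eAdd x)), eAdd.symm (h2 (eAdd y))))) := by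
          rw [eAdd.symm_apply_apply]
      _ = eAdd.symm (h3 (eAdd (f (x, y)))) := by rw [H']

theorem tr_sep {f : F₄ × F₄ → F₄} : SepVar f ↔ SepVar (tr f) := by
  constructor
  · rintro ⟨u, v, H⟩
    refine ⟨(⇑eAdd) ∘ u ∘ (⇑eAdd.symm), (⇑eAdd) ∘ v ∘ (⇑eAdd.symm), fun x y => ?_⟩
    show eAdd (f (eAdd.symm x, eAdd.symm y)) = _
    rw [H, map_add]
    rfl
  · rintro ⟨u, v, H⟩
    refine ⟨(⇑eAdd.symm) ∘ u ∘ (⇑eAdd), (⇑eAdd.symm) ∘ v ∘ (⇑eAdd), fun x y => ?_⟩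
    have H' := H (eAdd x) (eAdd y)
    simp only [tr, eAdd.symm_apply_apply] at H'
    have : f (x, y) = eAdd.symm (eAdd (f (x, y))) := (eAdd.symm_apply_apply _).symm
    rw [this, H', map_add]
    rfl

end Stmt15

/-- Two LPPs `f` and `g` over `F₄` are isotopic if and only
if (`f` has separate variables ↔ `g` has separate variables): there are
exactly two isotopism classes of LPPs over `F₄`. -/
theorem stmt_15 (f g : F₄ × F₄ → F₄) (hf : IsLPP f) (hg : IsLPP g) :
    Isotopic f g ↔ (SepVar f ↔ SepVar g) := by
  rw [Stmt15.tr_iso, Stmt15.tr_sep (f := f), Stmt15.tr_sep (f := g)]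
  exact Stmt15.mainV _ _ (Stmt15.tr_lpp hf) (Stmt15.tr_lpp hg)
end

section
/- Let q be a prime power and F_q the finite field with q elements. Let f₁, f₂ be LPPs over F_q and let (h₁, h₂, h₃) be an isotopism from f₁ to f₂, i.e., h₁, h₂, h₃ are bijections of F_q with f₂(h₁(x), h₂(y)) = h₃(f₁(x,y)) for all x, y. Then a bijection g of F_q is a complete mapping of f₁ if and only if h₂ ∘ g ∘ h₁⁻¹ is a complete mapping of f₂. In particular, there is a one-to-one correspondence between the complete mappings of f₁ and those of f₂. -/
/-- A complete mapping of an LPP `f` is a bijection `g` such that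
`x ↦ f (x, g x)` is a bijection. -/
def IsCompleteMapping {F : Type*} (f : F × F → F) (g : F → F) : Prop :=
  Function.Bijective g ∧ Function.Bijective (fun x => f (x, g x))

/-- If `(h₁, h₂, h₃)` is an isotopism from the LPP `f₁` to
the LPP `f₂`, then a bijection `g` is a complete mapping of `f₁` if and only if
`h₂ ∘ g ∘ h₁⁻¹` is a complete mapping of `f₂`; in particular, the complete
mappings of `f₁` and of `f₂` are in one-to-one correspondence. -/
theorem stmt_17 {F : Type*} [Field F] [Fintype F]
    (f₁ f₂ : F × F → F) (hf₁ : IsLPP f₁) (hf₂ : IsLPP f₂)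
    (h₁ h₂ h₃ : F → F) (hb₁ : Function.Bijective h₁) (hb₂ : Function.Bijective h₂)
    (hb₃ : Function.Bijective h₃)
    (hiso : ∀ x y : F, f₂ (h₁ x, h₂ y) = h₃ (f₁ (x, y))) :
    (∀ g : F → F, Function.Bijective g →
      (IsCompleteMapping f₁ g ↔ IsCompleteMapping f₂ (h₂ ∘ g ∘ Function.invFun h₁))) ∧
    Nonempty ({g : F → F // IsCompleteMapping f₁ g} ≃ {g : F → F // IsCompleteMapping f₂ g}) := by
  classical
  have hri₁ : Function.RightInverse (Function.invFun h₁) h₁ :=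
    Function.rightInverse_invFun hb₁.surjective
  have hli₁ : Function.LeftInverse (Function.invFun h₁) h₁ :=
    Function.leftInverse_invFun hb₁.injective
  have hbinv₁ : Function.Bijective (Function.invFun h₁) :=
    Function.bijective_iff_has_inverse.mpr ⟨h₁, hri₁, hli₁⟩
  have hri₂ : Function.RightInverse (Function.invFun h₂) h₂ :=
    Function.rightInverse_invFun hb₂.surjective
  have hli₂ : Function.LeftInverse (Function.invFun h₂) h₂ :=
    Function.leftInverse_invFun hb₂.injective
  have hbinv₂ : Function.Bijective (Function.invFun h₂) :=
    Function.bijective_iff_has_inverse.mpr ⟨h₂, hri₂, hli₂⟩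
  have hli₃ : Function.LeftInverse (Function.invFun h₃) h₃ :=
    Function.leftInverse_invFun hb₃.injective
  have key : ∀ g : F → F,
      (fun x => f₂ (x, (h₂ ∘ g ∘ Function.invFun h₁) x)) =
        h₃ ∘ (fun x => f₁ (x, g x)) ∘ Function.invFun h₁ := by
    intro g
    funext x
    have := hiso (Function.invFun h₁ x) (g (Function.invFun h₁ x))
    simp only [Function.comp_apply]
    rw [← hri₁ x]
    rw [hli₁]
    exact this
  have main : ∀ g : F → F, Function.Bijective g →
      (IsCompleteMapping f₁ g ↔ IsCompleteMapping f₂ (h₂ ∘ g ∘ Function.invFun h₁)) := by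
    intro g hg
    constructor
    · rintro ⟨_, hF⟩
      refine ⟨hb₂.comp (hg.comp hbinv₁), ?_⟩
      rw [key g]
      exact hb₃.comp (hF.comp hbinv₁)
    · rintro ⟨_, hF⟩
      refine ⟨hg, ?_⟩
      rw [key g] at hF
      have : (fun x => f₁ (x, g x)) =
          Function.invFun h₃ ∘ (h₃ ∘ (fun x => f₁ (x, g x)) ∘ Function.invFun h₁) ∘ h₁ := by
        funext x
        simp only [Function.comp_apply, hli₁ x, hli₃ _]
      rw [this]
      exact (Function.bijective_iff_has_inverse.mpr
        ⟨h₃, Function.rightInverse_invFun hb₃.surjective, hli₃⟩).comp (hF.comp hb₁)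
  refine ⟨main, ⟨?_⟩⟩
  refine
    { toFun := fun g => ⟨h₂ ∘ g.1 ∘ Function.invFun h₁, (main g.1 g.2.1).mp g.2⟩
      invFun := fun g => ⟨Function.invFun h₂ ∘ g.1 ∘ h₁, ?_⟩
      left_inv := ?_, right_inv := ?_ }
  · have hg' : Function.Bijective (Function.invFun h₂ ∘ g.1 ∘ h₁) :=
      hbinv₂.comp (g.2.1.comp hb₁)
    have := (main _ hg').mpr
    have heq : h₂ ∘ (Function.invFun h₂ ∘ g.1 ∘ h₁) ∘ Function.invFun h₁ = g.1 := by
      funext x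
      simp only [Function.comp_apply, hri₂ _, hri₁ x]
    apply this
    rw [heq]
    exact g.2
  · rintro ⟨g, hg⟩
    ext x
    simp only [Function.comp_apply, hli₂ _, hli₁ x]
  · rintro ⟨g, hg⟩
    ext x
    simp only [Function.comp_apply, hri₂ _, hri₁ x]
end

section
/- Let F₄ be the finite field with four elements and let f be an LPP over F₄. If f has separate variables (i.e., f(x,y) = u(x) + v(y) for some functions u, v : F₄ → F₄), then f has exactly 8 complete mappings: Nat.card {g : F₄ → F₄ | g is a bijection and x ↦ f(x, g(x)) is a bijection} = 8. If f does not have separate variables, then f has no complete mapping. -/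
set_option maxRecDepth 1000000
set_option synthInstance.maxSize 4000
set_option synthInstance.maxHeartbeats 4000000
set_option maxHeartbeats 4000000

/-! ### Auxiliary development on the concrete group `V = ZMod 2 × ZMod 2` -/

abbrev V : Type := ZMod 2 × ZMod 2

theorem charV : ∀ a : V, a + a = 0 := by decide

def dV : Fin 4 → V := ![(0,0),(1,0),(0,1),(1,1)]
def cV (x : V) : Fin 4 := if x = (1,0) then 1 else if x = (0,1) then 2 else if x = (1,1) then 3 else 0
def tbl : Fin 6 → Fin 4 → Fin 4 :=
  ![![0,1,2,3], ![0,1,3,2], ![0,2,1,3], ![0,2,3,1], ![0,3,1,2], ![0,3,2,1]]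
def perm6 (i : Fin 6) (x : V) : V := dV (tbl i (cV x))

theorem ext6 : ∀ q : V → V, (Function.Bijective q ∧ q 0 = 0) →
    ∃ i : Fin 6, ∀ x, q x = perm6 i x := by decide

def rw6 (i1 i2 i3 : Fin 6) (y : V) : V → V :=
  if y = (1,0) then perm6 i1 else if y = (0,1) then perm6 i2 else if y = (1,1) then perm6 i3 else id

theorem core : ∀ i1 i2 i3 : Fin 6,
    (∀ x, Function.Bijective (fun y : V => rw6 i1 i2 i3 y x + y)) →
    ∀ g : V → V, Function.Bijective g →
      Function.Bijective (fun x => rw6 i1 i2 i3 (g x) x + g x) →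
    ∀ x y, rw6 i1 i2 i3 y x + y = x + y := by decide

theorem count8 :
    Nat.card {h : V → V | Function.Bijective h ∧ Function.Bijective (fun x => x + h x)} = 8 := by
  rw [Nat.card_eq_fintype_card]
  decide

theorem casesV : ∀ y : V, y = 0 ∨ y = (1,0) ∨ y = (0,1) ∨ y = (1,1) := by decide

/-- the separated-variables case over `V` -/
theorem sep_count (f : V × V → V) (hf : IsLPP f) (u v : V → V)
    (huv : ∀ x y, f (x, y) = u x + v y) :
    Nat.card {g : V → V | IsCompleteMapping f g} = 8 := by
  have hu : Function.Bijective u := by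
    have h1 : Function.Bijective ((fun z : V => z + v 0) ∘ (fun x => f (x, 0))) :=
      (Equiv.addRight (v 0)).bijective.comp (hf 0).1
    have : ((fun z : V => z + v 0) ∘ (fun x => f (x, 0))) = u := by
      funext x
      simp only [Function.comp, huv, add_assoc, charV, add_zero]
    rwa [this] at h1
  have hv : Function.Bijective v := by
    have h1 : Function.Bijective ((fun z : V => u 0 + z) ∘ (fun y => f (0, y))) :=
      (Equiv.addLeft (u 0)).bijective.comp (hf 0).2
    have : ((fun z : V => u 0 + z) ∘ (fun y => f (0, y))) = v := by
      funext y
      simp only [Function.comp, huv, ← add_assoc, charV, zero_add]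
    rwa [this] at h1
  set uE := Equiv.ofBijective u hu with huE
  set vE := Equiv.ofBijective v hv with hvE
  have E : {g : V → V | IsCompleteMapping f g} ≃
      {h : V → V | Function.Bijective h ∧ Function.Bijective (fun x => x + h x)} := by
    refine Equiv.subtypeEquiv (Equiv.arrowCongr uE vE) (fun g => ?_)
    have harr : (Equiv.arrowCongr uE vE) g = ⇑vE ∘ g ∘ ⇑uE.symm := rfl
    constructor
    · rintro ⟨hg, hcm⟩
      refine ⟨?_, ?_⟩
      · rw [harr]
        exact vE.bijective.comp (hg.comp uE.symm.bijective)
      · have : (fun x => x + (Equiv.arrowCongr uE vE) g x) =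
            (fun x => f (x, g x)) ∘ ⇑uE.symm := by
          funext x
          simp only [harr, Function.comp, huv]
          congr 1
          exact (uE.apply_symm_apply x).symm
        rw [this]
        exact hcm.comp uE.symm.bijective
    · rintro ⟨hg, hcm⟩
      have hg' : Function.Bijective g := by
        have : g = ⇑vE.symm ∘ ((Equiv.arrowCongr uE vE) g) ∘ ⇑uE := by
          funext x; simp [harr]
        rw [this]
        exact vE.symm.bijective.comp (hg.comp uE.bijective)
      refine ⟨hg', ?_⟩
      have : (fun x => f (x, g x)) = (fun x => x + (Equiv.arrowCongr uE vE) g x) ∘ ⇑uE := by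
        funext x
        simp only [harr, Function.comp, huv, Equiv.symm_apply_apply]
        rfl
      rw [this]
      exact hcm.comp uE.bijective
  rw [Nat.card_congr E]
  exact count8

/-- the non-separated case over `V`: a complete mapping forces separated variables -/
theorem nosep (f : V × V → V) (hf : IsLPP f) (g : V → V) (hg : IsCompleteMapping f g) :
    SepVar f := by
  set rE := Equiv.ofBijective (fun x => f (x, 0)) (hf 0).1 with hrE
  set tE := Equiv.ofBijective (fun y => f (rE.symm 0, y)) (hf (rE.symm 0)).2 with htE
  have ht0 : tE 0 = 0 := by
    show f (rE.symm 0, 0) = 0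
    exact rE.apply_symm_apply 0
  have hts0 : tE.symm 0 = 0 := (Equiv.symm_apply_eq tE).mpr ht0.symm
  set f₁ : V → V → V := fun x y => f (rE.symm x, tE.symm y) with hf₁
  have n1 : ∀ x, f₁ x 0 = x := by
    intro x
    show f (rE.symm x, tE.symm 0) = x
    rw [hts0]
    exact rE.apply_symm_apply x
  have n2 : ∀ y, f₁ 0 y = y := by
    intro y
    show f (rE.symm 0, tE.symm y) = y
    exact tE.apply_symm_apply y
  -- rows of f₁, recentred
  have hrow : ∀ y : V, Function.Bijective (fun x => f₁ x y + y) ∧ (f₁ 0 y + y = 0) := by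
    intro y
    constructor
    · have h1 : Function.Bijective ((fun z : V => z + y) ∘ ((fun w => f (w, tE.symm y)) ∘ ⇑rE.symm)) :=
        (Equiv.addRight y).bijective.comp ((hf (tE.symm y)).1.comp rE.symm.bijective)
      exact h1
    · rw [n2, charV]
  obtain ⟨i1, hi1⟩ := ext6 (fun x => f₁ x (1,0) + (1,0)) (hrow (1,0))
  obtain ⟨i2, hi2⟩ := ext6 (fun x => f₁ x (0,1) + (0,1)) (hrow (0,1))
  obtain ⟨i3, hi3⟩ := ext6 (fun x => f₁ x (1,1) + (1,1)) (hrow (1,1))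
  have key : ∀ x y, rw6 i1 i2 i3 y x + y = f₁ x y := by
    intro x y
    rcases casesV y with h | h | h | h <;> subst h
    · show rw6 i1 i2 i3 0 x + 0 = f₁ x 0
      have : rw6 i1 i2 i3 0 = id := by rfl
      rw [this, n1]; simp
    · have : rw6 i1 i2 i3 (1,0) = perm6 i1 := by rfl
      rw [this, ← hi1]
      rw [add_assoc, charV, add_zero]
    · have : rw6 i1 i2 i3 (0,1) = perm6 i2 := by rfl
      rw [this, ← hi2]
      rw [add_assoc, charV, add_zero]
    · have : rw6 i1 i2 i3 (1,1) = perm6 i3 := by rfl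
      rw [this, ← hi3]
      rw [add_assoc, charV, add_zero]
  -- column bijectivity for the row table
  have hcol : ∀ x, Function.Bijective (fun y : V => rw6 i1 i2 i3 y x + y) := by
    intro x
    have : (fun y : V => rw6 i1 i2 i3 y x + y) = (fun w => f (rE.symm x, w)) ∘ ⇑tE.symm := by
      funext y
      rw [key]
      rfl
    rw [this]
    exact (hf (rE.symm x)).2.comp tE.symm.bijective
  -- complete mapping for f₁
  set g₁ : V → V := ⇑tE ∘ g ∘ ⇑rE.symm with hg₁
  have hg₁b : Function.Bijective g₁ :=
    tE.bijective.comp (hg.1.comp rE.symm.bijective)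
  have hcm₁ : Function.Bijective (fun x => rw6 i1 i2 i3 (g₁ x) x + g₁ x) := by
    have : (fun x => rw6 i1 i2 i3 (g₁ x) x + g₁ x) = (fun w => f (w, g w)) ∘ ⇑rE.symm := by
      funext x
      rw [key]
      show f (rE.symm x, tE.symm (tE (g (rE.symm x)))) = f (rE.symm x, g (rE.symm x))
      rw [Equiv.symm_apply_apply]
    rw [this]
    exact hg.2.comp rE.symm.bijective
  have final : ∀ x y, f₁ x y = x + y := by
    intro x y
    rw [← key, core i1 i2 i3 hcol g₁ hg₁b hcm₁ x y]
  refine ⟨⇑rE, ⇑tE, fun x y => ?_⟩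
  have : f (x, y) = f₁ (rE x) (tE y) := by
    show f (x, y) = f (rE.symm (rE x), tE.symm (tE y))
    rw [Equiv.symm_apply_apply, Equiv.symm_apply_apply]
  rw [this, final]

/-- the full statement over `V` -/
theorem keyV (f : V × V → V) (hf : IsLPP f) :
    (SepVar f → Nat.card {g : V → V | IsCompleteMapping f g} = 8) ∧
    (¬ SepVar f → ¬ ∃ g : V → V, IsCompleteMapping f g) := by
  constructor
  · rintro ⟨u, v, huv⟩
    exact sep_count f hf u v huv
  · rintro hns ⟨g, hg⟩
    exact hns (nosep f hf g hg)

/-! ### Transfer from `F₄` to `V` -/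

/-- An LPP over `F₄` with separate variables has exactly `8`
complete mappings, while an LPP over `F₄` without separate variables has no
complete mapping. -/
theorem stmt_18 (f : F₄ × F₄ → F₄) (hf : IsLPP f) :
    (SepVar f → Nat.card {g : F₄ → F₄ | IsCompleteMapping f g} = 8) ∧
    (¬ SepVar f → ¬ ∃ g : F₄ → F₄, IsCompleteMapping f g) := by
  haveI : Fact (Nat.Prime 2) := ⟨by norm_num⟩
  obtain ⟨l⟩ : Nonempty (F₄ ≃ₗ[ZMod 2] V) := by
    apply FiniteDimensional.nonempty_linearEquiv_of_finrank_eq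
    rw [GaloisField.finrank 2 (by norm_num : 2 ≠ 0)]
    rw [Module.finrank_prod, Module.finrank_self]
  set e : F₄ ≃+ V := l.toAddEquiv with he
  set f' : V × V → V := fun z => e (f (e.symm z.1, e.symm z.2)) with hf'def
  have hf' : IsLPP f' := by
    intro a
    constructor
    · have : (fun x => f' (x, a)) = ⇑e ∘ (fun w => f (w, e.symm a)) ∘ ⇑e.symm := rfl
      rw [this]
      exact e.bijective.comp ((hf (e.symm a)).1.comp e.symm.bijective)
    · have : (fun x => f' (a, x)) = ⇑e ∘ (fun w => f (e.symm a, w)) ∘ ⇑e.symm := rfl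
      rw [this]
      exact e.bijective.comp ((hf (e.symm a)).2.comp e.symm.bijective)
  have hsep : SepVar f ↔ SepVar f' := by
    constructor
    · rintro ⟨u, v, huv⟩
      refine ⟨⇑e ∘ u ∘ ⇑e.symm, ⇑e ∘ v ∘ ⇑e.symm, fun x y => ?_⟩
      show e (f (e.symm x, e.symm y)) = _
      rw [huv]
      exact map_add e _ _
    · rintro ⟨u, v, huv⟩
      refine ⟨⇑e.symm ∘ u ∘ ⇑e, ⇑e.symm ∘ v ∘ ⇑e, fun x y => ?_⟩
      have h1 : f (x, y) = e.symm (f' (e x, e y)) := by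
        show f (x, y) = e.symm (e (f (e.symm (e x), e.symm (e y))))
        rw [e.symm_apply_apply, e.symm_apply_apply, e.symm_apply_apply]
      rw [h1, huv]
      exact map_add e.symm _ _
  have cmiff : ∀ g : F₄ → F₄, IsCompleteMapping f g ↔
      IsCompleteMapping f' (⇑e ∘ g ∘ ⇑e.symm) := by
    intro g
    have harr2 : (fun x => f' (x, (⇑e ∘ g ∘ ⇑e.symm) x)) =
        ⇑e ∘ (fun w => f (w, g w)) ∘ ⇑e.symm := by
      funext x
      show e (f (e.symm x, e.symm (e (g (e.symm x))))) = _
      rw [e.symm_apply_apply]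
      rfl
    constructor
    · rintro ⟨hg, hcm⟩
      refine ⟨e.bijective.comp (hg.comp e.symm.bijective), ?_⟩
      rw [harr2]
      exact e.bijective.comp (hcm.comp e.symm.bijective)
    · rintro ⟨hg, hcm⟩
      have hg' : Function.Bijective g := by
        have : g = ⇑e.symm ∘ (⇑e ∘ g ∘ ⇑e.symm) ∘ ⇑e := by
          funext x
          simp [e.symm_apply_apply]
        rw [this]
        exact e.symm.bijective.comp (hg.comp e.bijective)
      refine ⟨hg', ?_⟩
      have : (fun x => f (x, g x)) = ⇑e.symm ∘ (fun x => f' (x, (⇑e ∘ g ∘ ⇑e.symm) x)) ∘ ⇑e := by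
        rw [harr2]
        funext x
        simp [e.symm_apply_apply]
      rw [this]
      exact e.symm.bijective.comp (hcm.comp e.bijective)
  have E : {g : F₄ → F₄ | IsCompleteMapping f g} ≃ {g : V → V | IsCompleteMapping f' g} :=
    Equiv.subtypeEquiv (Equiv.arrowCongr e.toEquiv e.toEquiv) (fun g => cmiff g)
  obtain ⟨h1, h2⟩ := keyV f' hf'
  constructor
  · intro hs
    rw [Nat.card_congr E]
    exact h1 (hsep.mp hs)
  · intro hns ⟨g, hg⟩
    exact h2 (fun hs' => hns (hsep.mpr hs')) ⟨⇑e ∘ g ∘ ⇑e.symm, (cmiff g).mp hg⟩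
end

section
/- Let q be a prime power, F_q the finite field with q elements, and let f, g₁, g₂ be LPPs over F_q. Define h : F_q × F_q → F_q by h(x,y) = f(g₁(x,y), g₂(x,y)). Then h is an LPP over F_q if and only if for every a ∈ F_q, both of the sets {(g₁(a,b), g₂(a,b), h(a,b)) : b ∈ F_q} and {(g₁(b,a), g₂(b,a), h(b,a)) : b ∈ F_q} are transversals of the Latin square L_f. -/
/-- `S` is a transversal of the Latin square `L_f` associated with
`f : F × F → F`: a subset of `Ent (L_f) = {(a, b, f (a, b))}` of cardinality
`|F|` whose elements have pairwise distinct first coordinates, pairwise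
distinct second coordinates, and pairwise distinct third coordinates. -/
def IsTransversal {F : Type*} [Fintype F] (f : F × F → F) (S : Set (F × F × F)) : Prop :=
  (∀ t ∈ S, t.2.2 = f (t.1, t.2.1)) ∧
  Nat.card S = Fintype.card F ∧
  (∀ t ∈ S, ∀ t' ∈ S, t ≠ t' → t.1 ≠ t'.1 ∧ t.2.1 ≠ t'.2.1 ∧ t.2.2 ≠ t'.2.2)

/-- Key lemma: for bijections `u, v`, the set `{(u b, v b, f (u b, v b))}`
is a transversal of `L_f` iff `b ↦ f (u b, v b)` is injective. -/
lemma transversal_iff_injective {F : Type*} [Fintype F] (f : F × F → F) (u v : F → F)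
    (hu : Function.Bijective u) (hv : Function.Bijective v) :
    IsTransversal f {t : F × F × F | ∃ b : F, t = (u b, v b, f (u b, v b))} ↔
      Function.Injective (fun b => f (u b, v b)) := by
  constructor
  · rintro ⟨-, -, hdist⟩ b b' (hbb' : f (u b, v b) = f (u b', v b'))
    by_contra hne
    have h1 : ((u b, v b, f (u b, v b)) : F × F × F) ∈
        {t : F × F × F | ∃ b : F, t = (u b, v b, f (u b, v b))} := ⟨b, rfl⟩
    have h2 : ((u b', v b', f (u b', v b')) : F × F × F) ∈
        {t : F × F × F | ∃ b : F, t = (u b, v b, f (u b, v b))} := ⟨b', rfl⟩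
    have hneq : ((u b, v b, f (u b, v b)) : F × F × F) ≠ (u b', v b', f (u b', v b')) := by
      intro h
      exact hne (hu.injective (congrArg Prod.fst h))
    exact (hdist _ h1 _ h2 hneq).2.2 hbb'
  · intro hinj
    have hkey : Function.Injective (fun b : F => ((u b, v b, f (u b, v b)) : F × F × F)) := by
      intro b b' h
      exact hu.injective (congrArg Prod.fst h)
    refine ⟨?_, ?_, ?_⟩
    · rintro t ⟨b, rfl⟩; rfl
    · have : {t : F × F × F | ∃ b : F, t = (u b, v b, f (u b, v b))} =
          Set.range (fun b : F => ((u b, v b, f (u b, v b)) : F × F × F)) := by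
        ext t; simp [eq_comm, Set.mem_setOf_eq]
      rw [this, Nat.card_range_of_injective hkey, Nat.card_eq_fintype_card]
    · rintro t ⟨b, rfl⟩ t' ⟨b', rfl⟩ hne
      have hbb' : b ≠ b' := fun h => hne (by rw [h])
      refine ⟨fun h => hbb' (hu.injective h), fun h => hbb' (hv.injective h),
        fun h => hbb' (hinj h)⟩

/-- For LPPs `f, g₁, g₂` over a finite field `F`, the map
`h (x, y) = f (g₁ (x, y), g₂ (x, y))` is an LPP if and only if for every
`a ∈ F` both sets `{(g₁ (a, b), g₂ (a, b), h (a, b)) : b ∈ F}` and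
`{(g₁ (b, a), g₂ (b, a), h (b, a)) : b ∈ F}` are transversals of `L_f`. -/
theorem stmt_19 {F : Type*} [Field F] [Fintype F]
    (f g₁ g₂ : F × F → F) (hf : IsLPP f) (hg₁ : IsLPP g₁) (hg₂ : IsLPP g₂) :
    IsLPP (fun p : F × F => f (g₁ p, g₂ p)) ↔
      ∀ a : F,
        IsTransversal f {t : F × F × F | ∃ b : F,
          t = (g₁ (a, b), g₂ (a, b), f (g₁ (a, b), g₂ (a, b)))} ∧
        IsTransversal f {t : F × F × F | ∃ b : F,
          t = (g₁ (b, a), g₂ (b, a), f (g₁ (b, a), g₂ (b, a)))} := by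
  constructor
  · intro hh a
    exact ⟨(transversal_iff_injective f (fun b => g₁ (a, b)) (fun b => g₂ (a, b))
        (hg₁ a).2 (hg₂ a).2).mpr (hh a).2.injective,
      (transversal_iff_injective f (fun b => g₁ (b, a)) (fun b => g₂ (b, a))
        (hg₁ a).1 (hg₂ a).1).mpr (hh a).1.injective⟩
  · intro hT a
    exact ⟨Finite.injective_iff_bijective.mp
        ((transversal_iff_injective f (fun b => g₁ (b, a)) (fun b => g₂ (b, a))
          (hg₁ a).1 (hg₂ a).1).mp (hT a).2),
      Finite.injective_iff_bijective.mp
        ((transversal_iff_injective f (fun b => g₁ (a, b)) (fun b => g₂ (a, b))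
          (hg₁ a).2 (hg₂ a).2).mp (hT a).1)⟩
end
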